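/- arXiv:1909.13383 — 4 statements merged into one kernel-verified Lean document; each statement's English description precedes it below -/
import Mathlib

section
/- Let $x(t) = (\theta(t), y(t))$, $t \in [t_1, t_2]$, be a constant speed geodesic in $\mathbb{R} \times \mathbb{R}^{n-2}$ with respect to the metric $ds_h^2 = (1+|y|^2) d\theta^2 + |dy|^2 + |y \wedge dy|^2$. Then the function $t \mapsto |y(t)|^2$ is convex; in particular $\max_{t \in [t_1,t_2]} |y(t)| = \max\{|y(t_1)|, |y(t_2)|\}$. -/
noncomputable section

/-- The quadratic form of the metric `ds_h² = (1+|y|²)dθ² + |dy|² + |y ∧ dy|²` on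
`ℝ × ℝ^k` at the point `p = (θ,y)` evaluated on the tangent vector `v = (vθ, vy)`;
here `|y ∧ vy|² = |y|²|vy|² - (y⋅vy)²`. -/
def hQ (k : ℕ) (p v : ℝ × EuclideanSpace ℝ (Fin k)) : ℝ :=
  (1 + ‖p.2‖ ^ 2) * v.1 ^ 2 + ‖v.2‖ ^ 2
    + (‖p.2‖ ^ 2 * ‖v.2‖ ^ 2 - (inner ℝ p.2 v.2 : ℝ) ^ 2)

/-- The energy of the curve `z` on `[t1,t2]` with respect to the metric `h`. -/
def energy (k : ℕ) (t1 t2 : ℝ) (z : ℝ → ℝ × EuclideanSpace ℝ (Fin k)) : ℝ :=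
  ∫ t in t1..t2, hQ k (z t) (deriv z t)

open RealInnerProductSpace intervalIntegral Set

/-- First-order coefficient of `s ↦ hQ k (p + s•q) (w + s•u)`. -/
def cE1 (k : ℕ) (p q w u : ℝ × EuclideanSpace ℝ (Fin k)) : ℝ :=
  2*⟪p.2,q.2⟫*w.1^2 + 2*(1+⟪p.2,p.2⟫)*(w.1*u.1) + 2*(1+⟪p.2,p.2⟫)*⟪w.2,u.2⟫
  + 2*⟪p.2,q.2⟫*⟪w.2,w.2⟫ - 2*⟪p.2,w.2⟫*(⟪p.2,u.2⟫+⟪q.2,w.2⟫)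

/-- Second-order coefficient. -/
def cE2 (k : ℕ) (p q w u : ℝ × EuclideanSpace ℝ (Fin k)) : ℝ :=
  ⟪q.2,q.2⟫*w.1^2 + 4*⟪p.2,q.2⟫*(w.1*u.1) + (1+⟪p.2,p.2⟫)*u.1^2
  + (1+⟪p.2,p.2⟫)*⟪u.2,u.2⟫ + ⟪q.2,q.2⟫*⟪w.2,w.2⟫ + 4*⟪p.2,q.2⟫*⟪w.2,u.2⟫
  - (⟪p.2,u.2⟫+⟪q.2,w.2⟫)^2 - 2*⟪p.2,w.2⟫*⟪q.2,u.2⟫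

/-- Third-order coefficient. -/
def cE3 (k : ℕ) (p q w u : ℝ × EuclideanSpace ℝ (Fin k)) : ℝ :=
  2*⟪q.2,q.2⟫*(w.1*u.1) + 2*⟪p.2,q.2⟫*u.1^2 + 2*⟪q.2,q.2⟫*⟪w.2,u.2⟫
  + 2*⟪p.2,q.2⟫*⟪u.2,u.2⟫ - 2*(⟪p.2,u.2⟫+⟪q.2,w.2⟫)*⟪q.2,u.2⟫

/-- Fourth-order coefficient. -/
def cE4 (k : ℕ) (p q w u : ℝ × EuclideanSpace ℝ (Fin k)) : ℝ :=
  ⟪q.2,q.2⟫*u.1^2 + ⟪q.2,q.2⟫*⟪u.2,u.2⟫ - ⟪q.2,u.2⟫^2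

theorem hQ_expand {k : ℕ} (p q w u : ℝ × EuclideanSpace ℝ (Fin k)) (s : ℝ) :
    hQ k (p + s • q) (w + s • u) =
      hQ k p w + s * cE1 k p q w u + s^2 * cE2 k p q w u
        + s^3 * cE3 k p q w u + s^4 * cE4 k p q w u := by
  simp only [hQ, cE1, cE2, cE3, cE4, Prod.fst_add, Prod.snd_add, Prod.smul_fst, Prod.smul_snd,
    smul_eq_mul, ← real_inner_self_eq_norm_sq]
  simp only [inner_add_left, inner_add_right, real_inner_smul_left, real_inner_smul_right]
  rw [real_inner_comm q.2 p.2, real_inner_comm u.2 w.2, real_inner_comm w.2 p.2,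
    real_inner_comm u.2 p.2, real_inner_comm w.2 q.2, real_inner_comm u.2 q.2]
  ring

theorem cE_cont {k : ℕ} (P Q W U : ℝ → ℝ × EuclideanSpace ℝ (Fin k)) (hP : Continuous P)
    (hQc : Continuous Q) (hW : Continuous W) (hU : Continuous U) :
    Continuous (fun t => cE1 k (P t) (Q t) (W t) (U t)) ∧
    Continuous (fun t => cE2 k (P t) (Q t) (W t) (U t)) ∧
    Continuous (fun t => cE3 k (P t) (Q t) (W t) (U t)) ∧
    Continuous (fun t => cE4 k (P t) (Q t) (W t) (U t)) := by
  have hpq : Continuous fun t => ⟪(P t).2, (Q t).2⟫ := hP.snd.inner hQc.snd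
  have hpp : Continuous fun t => ⟪(P t).2, (P t).2⟫ := hP.snd.inner hP.snd
  have hwu : Continuous fun t => ⟪(W t).2, (U t).2⟫ := hW.snd.inner hU.snd
  have hww : Continuous fun t => ⟪(W t).2, (W t).2⟫ := hW.snd.inner hW.snd
  have hpw : Continuous fun t => ⟪(P t).2, (W t).2⟫ := hP.snd.inner hW.snd
  have hpu : Continuous fun t => ⟪(P t).2, (U t).2⟫ := hP.snd.inner hU.snd
  have hqw : Continuous fun t => ⟪(Q t).2, (W t).2⟫ := hQc.snd.inner hW.snd
  have hqq : Continuous fun t => ⟪(Q t).2, (Q t).2⟫ := hQc.snd.inner hQc.snd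
  have huu : Continuous fun t => ⟪(U t).2, (U t).2⟫ := hU.snd.inner hU.snd
  have hqu : Continuous fun t => ⟪(Q t).2, (U t).2⟫ := hQc.snd.inner hU.snd
  have hw1 : Continuous fun t => (W t).1 := hW.fst
  have hu1 : Continuous fun t => (U t).1 := hU.fst
  refine ⟨?_, ?_, ?_, ?_⟩ <;>
    · simp only [cE1, cE2, cE3, cE4]
      fun_prop

theorem energy_deriv {k : ℕ} (t1 t2 : ℝ) (x v : ℝ → ℝ × EuclideanSpace ℝ (Fin k))
    (hx : ContDiff ℝ 2 x) (hv : ContDiff ℝ 1 v) :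
    HasDerivAt (fun s : ℝ => energy k t1 t2 (fun t => x t + s • v t))
      (∫ t in t1..t2, cE1 k (x t) (v t) (deriv x t) (deriv v t)) 0 := by
  have hdx : Differentiable ℝ x := hx.differentiable two_ne_zero
  have hdv : Differentiable ℝ v := hv.differentiable one_ne_zero
  have hcx : Continuous (deriv x) := hx.continuous_deriv one_le_two
  have hcv : Continuous (deriv v) := hv.continuous_deriv le_rfl
  set g0 : ℝ → ℝ := fun t => hQ k (x t) (deriv x t) with hg0
  set g1 : ℝ → ℝ := fun t => cE1 k (x t) (v t) (deriv x t) (deriv v t) with hg1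
  set g2 : ℝ → ℝ := fun t => cE2 k (x t) (v t) (deriv x t) (deriv v t) with hg2
  set g3 : ℝ → ℝ := fun t => cE3 k (x t) (v t) (deriv x t) (deriv v t) with hg3
  set g4 : ℝ → ℝ := fun t => cE4 k (x t) (v t) (deriv x t) (deriv v t) with hg4
  obtain ⟨hc1, hc2, hc3, hc4⟩ := cE_cont x v (deriv x) (deriv v) hx.continuous hv.continuous hcx hcv
  have hI0 : IntervalIntegrable g0 MeasureTheory.volume t1 t2 := by
    apply Continuous.intervalIntegrable
    have h1 : Continuous fun t => ⟪(x t).2, (x t).2⟫ := hx.continuous.snd.inner hx.continuous.snd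
    have h2 : Continuous fun t => ⟪(deriv x t).2, (deriv x t).2⟫ := hcx.snd.inner hcx.snd
    have h3 : Continuous fun t => ⟪(x t).2, (deriv x t).2⟫ := hx.continuous.snd.inner hcx.snd
    have h4 : Continuous fun t => (deriv x t).1 := hcx.fst
    simp only [hg0, hQ, ← real_inner_self_eq_norm_sq]
    fun_prop
  have hI1 : IntervalIntegrable g1 MeasureTheory.volume t1 t2 := hc1.intervalIntegrable _ _
  have hI2 : IntervalIntegrable g2 MeasureTheory.volume t1 t2 := hc2.intervalIntegrable _ _
  have hI3 : IntervalIntegrable g3 MeasureTheory.volume t1 t2 := hc3.intervalIntegrable _ _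
  have hI4 : IntervalIntegrable g4 MeasureTheory.volume t1 t2 := hc4.intervalIntegrable _ _
  have hfun : ∀ s : ℝ, energy k t1 t2 (fun t => x t + s • v t) =
      (∫ t in t1..t2, g0 t) + s * (∫ t in t1..t2, g1 t) + s^2 * (∫ t in t1..t2, g2 t)
        + s^3 * (∫ t in t1..t2, g3 t) + s^4 * (∫ t in t1..t2, g4 t) := by
    intro s
    have hder : ∀ t : ℝ, deriv (fun t => x t + s • v t) t = deriv x t + s • deriv v t := by
      intro t
      exact (((hdx t).hasDerivAt).add (((hdv t).hasDerivAt).const_smul s)).deriv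
    have heq : energy k t1 t2 (fun t => x t + s • v t) =
        ∫ t in t1..t2, (g0 t + s * g1 t + s^2 * g2 t + s^3 * g3 t + s^4 * g4 t) := by
      unfold energy
      congr 1
      funext t
      rw [hder t, hQ_expand]
    rw [heq, integral_add (((hI0.add (hI1.const_mul s)).add (hI2.const_mul (s^2))).add
        (hI3.const_mul (s^3))) (hI4.const_mul (s^4)),
      integral_add ((hI0.add (hI1.const_mul s)).add (hI2.const_mul (s^2))) (hI3.const_mul (s^3)),
      integral_add (hI0.add (hI1.const_mul s)) (hI2.const_mul (s^2)),
      integral_add hI0 (hI1.const_mul s), integral_const_mul, integral_const_mul,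
      integral_const_mul, integral_const_mul]
  have hpoly : HasDerivAt (fun s : ℝ =>
      (∫ t in t1..t2, g0 t) + s * (∫ t in t1..t2, g1 t) + s^2 * (∫ t in t1..t2, g2 t)
        + s^3 * (∫ t in t1..t2, g3 t) + s^4 * (∫ t in t1..t2, g4 t))
      (∫ t in t1..t2, g1 t) 0 := by
    have h1 : HasDerivAt (fun s : ℝ => s * (∫ t in t1..t2, g1 t)) (∫ t in t1..t2, g1 t) 0 := by
      simpa using (hasDerivAt_id (0:ℝ)).mul_const _
    have h2 : HasDerivAt (fun s : ℝ => s^2 * (∫ t in t1..t2, g2 t)) 0 0 := by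
      simpa using (hasDerivAt_pow 2 (0:ℝ)).mul_const (∫ t in t1..t2, g2 t)
    have h3 : HasDerivAt (fun s : ℝ => s^3 * (∫ t in t1..t2, g3 t)) 0 0 := by
      simpa using (hasDerivAt_pow 3 (0:ℝ)).mul_const (∫ t in t1..t2, g3 t)
    have h4 : HasDerivAt (fun s : ℝ => s^4 * (∫ t in t1..t2, g4 t)) 0 0 := by
      simpa using (hasDerivAt_pow 4 (0:ℝ)).mul_const (∫ t in t1..t2, g4 t)
    simpa using (((h1.const_add _).fun_add h2).fun_add h3).fun_add h4
  exact hpoly.congr_of_eventuallyEq (Filter.Eventually.of_forall fun s => hfun s)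

/-- A bump-function version of the fundamental lemma: positivity at an interior point
is impossible. -/
theorem fund_pos {a b : ℝ} (hab : a < b) (W : ℝ → ℝ) (hW : Continuous W)
    (h : ∀ φ : ℝ → ℝ, ContDiff ℝ 1 φ → (∀ t, t ∉ Set.Ioo a b → φ t = 0) →
      (∫ t in a..b, φ t * W t) = 0)
    {t0 : ℝ} (ht0 : t0 ∈ Set.Ioo a b) : ¬ 0 < W t0 := by
  intro hpos
  obtain ⟨δ, hδ, hball⟩ : ∃ δ > 0, ∀ t, |t - t0| < δ → W t0 / 2 < W t := by
    obtain ⟨δ, hδ, hd⟩ := Metric.continuousAt_iff.mp hW.continuousAt (W t0 / 2) (by linarith)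
    refine ⟨δ, hδ, fun t hlt => ?_⟩
    have h1 := hd (show dist t t0 < δ by rwa [Real.dist_eq])
    rw [Real.dist_eq] at h1
    have h2 := abs_lt.mp h1
    linarith [h2.1, h2.2]
  obtain ⟨ha, hb⟩ := ht0
  set r : ℝ := min δ (min (t0 - a) (b - t0)) / 2 with hr
  have hr0 : 0 < r := by
    have h1 : (0:ℝ) < min δ (min (t0 - a) (b - t0)) :=
      lt_min hδ (lt_min (by linarith) (by linarith))
    rw [hr]; linarith
  have hrδ : r < δ := by
    have h1 : min δ (min (t0 - a) (b - t0)) ≤ δ := min_le_left _ _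
    linarith
  have hra : r < t0 - a := by
    have h1 : min δ (min (t0 - a) (b - t0)) ≤ t0 - a := (min_le_right _ _).trans (min_le_left _ _)
    linarith
  have hrb : r < b - t0 := by
    have h1 : min δ (min (t0 - a) (b - t0)) ≤ b - t0 := (min_le_right _ _).trans (min_le_right _ _)
    linarith
  set β : ContDiffBump t0 := ⟨r/2, r, by linarith, by linarith⟩ with hβ
  set φ : ℝ → ℝ := fun t => β t with hφ
  have hφin : ∀ t, φ t ≠ 0 → |t - t0| < r := by
    intro t htne
    have : t ∈ Function.support φ := Function.mem_support.mpr htne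
    rw [hφ] at this
    have h2 : t ∈ Function.support β := this
    rw [β.support_eq] at h2
    have := Metric.mem_ball.mp h2
    rwa [Real.dist_eq] at this
  have hφ0 : ∀ t, t ∉ Set.Ioo a b → φ t = 0 := by
    intro t htn
    by_contra hne
    have h1 := hφin t hne
    have h2 := abs_lt.mp h1
    exact htn ⟨by linarith, by linarith⟩
  have hzero := h φ (β.contDiff) hφ0
  have hnn : ∀ t, 0 ≤ φ t * W t := by
    intro t
    by_cases hz : φ t = 0
    · simp [hz]
    · have h1 := hφin t hz
      have h2 : W t0 / 2 < W t := hball t (by linarith)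
      exact mul_nonneg β.nonneg (by linarith)
  have hcont : Continuous fun t => φ t * W t := β.continuous.mul hW
  set cc : ℝ := t0 - r/2 with hcc
  set dd : ℝ := t0 + r/2 with hdd
  have hacc : a ≤ cc := by rw [hcc]; linarith
  have hccdd : cc ≤ dd := by rw [hcc, hdd]; linarith
  have hddb : dd ≤ b := by rw [hdd]; linarith
  have hmid : r * (W t0 / 2) ≤ ∫ t in cc..dd, φ t * W t := by
    have hconst : (∫ _ in cc..dd, W t0 / 2) = r * (W t0 / 2) := by
      rw [integral_const, smul_eq_mul]
      congr 1
      rw [hdd, hcc]; ring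
    rw [← hconst]
    apply integral_mono_on hccdd (intervalIntegrable_const) (hcont.intervalIntegrable _ _)
    intro t htm
    have h1 : |t - t0| ≤ r/2 := by
      rw [abs_le]
      constructor
      · have := htm.1; rw [hcc] at this; linarith
      · have := htm.2; rw [hdd] at this; linarith
    have hone : φ t = 1 := β.one_of_mem_closedBall (by
      rw [Metric.mem_closedBall, Real.dist_eq]; exact h1)
    rw [hone, one_mul]
    exact le_of_lt (hball t (by linarith [abs_nonneg (t - t0)]))
  have hsplit : (∫ t in a..b, φ t * W t) =
      (∫ t in a..cc, φ t * W t) + (∫ t in cc..dd, φ t * W t) + (∫ t in dd..b, φ t * W t) := by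
    rw [integral_add_adjacent_intervals (hcont.intervalIntegrable a cc)
      (hcont.intervalIntegrable cc dd),
      integral_add_adjacent_intervals (hcont.intervalIntegrable a dd)
      (hcont.intervalIntegrable dd b)]
  have h1 : (0:ℝ) ≤ ∫ t in a..cc, φ t * W t := integral_nonneg hacc fun u _ => hnn u
  have h2 : (0:ℝ) ≤ ∫ t in dd..b, φ t * W t := integral_nonneg hddb fun u _ => hnn u
  have : (0:ℝ) < r * (W t0 / 2) := by positivity
  rw [hsplit] at hzero
  linarith

theorem fund_zero {a b : ℝ} (hab : a < b) (W : ℝ → ℝ) (hW : Continuous W)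
    (h : ∀ φ : ℝ → ℝ, ContDiff ℝ 1 φ → (∀ t, t ∉ Set.Ioo a b → φ t = 0) →
      (∫ t in a..b, φ t * W t) = 0)
    {t0 : ℝ} (ht0 : t0 ∈ Set.Ioo a b) : W t0 = 0 := by
  have hle : ¬ 0 < W t0 := fund_pos hab W hW h ht0
  have hge : ¬ 0 < -W t0 := by
    apply fund_pos hab (fun t => -W t) hW.neg _ ht0
    intro φ hφ hφ0
    have := h φ hφ hφ0
    have heq : (∫ t in a..b, φ t * -W t) = -∫ t in a..b, φ t * W t := by
      rw [← integral_neg]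
      congr 1
      funext t
      ring
    rw [heq, this, neg_zero]
  push_neg at hle hge
  linarith

/-- Let `x(t) = (θ(t), y(t))`, `t ∈ [t1,t2]`, be a constant speed
geodesic of the metric `ds_h² = (1+|y|²)dθ² + |dy|² + |y ∧ dy|²` on `ℝ × ℝ^{n-2}`,
i.e. a constant-speed critical point of the energy among curves with the same endpoints.
Then `t ↦ |y(t)|²` is convex on `[t1,t2]`; in particular
`max_{[t1,t2]} |y| = max(|y(t1)|, |y(t2)|)`. -/
theorem stmt5 (k : ℕ) (t1 t2 : ℝ) (ht : t1 < t2)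
    (x : ℝ → ℝ × EuclideanSpace ℝ (Fin k)) (hx : ContDiff ℝ 2 x) (c : ℝ)
    (hspeed : ∀ t, hQ k (x t) (deriv x t) = c)
    (hcrit : ∀ v : ℝ → ℝ × EuclideanSpace ℝ (Fin k), ContDiff ℝ 1 v →
      v t1 = 0 → v t2 = 0 →
      HasDerivAt (fun s : ℝ => energy k t1 t2 (fun t => x t + s • v t)) 0 0) :
    ConvexOn ℝ (Set.Icc t1 t2) (fun t => ‖(x t).2‖ ^ 2) ∧
      ∀ t ∈ Set.Icc t1 t2, ‖(x t).2‖ ≤ max ‖(x t1).2‖ ‖(x t2).2‖ := by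
  have hdx : Differentiable ℝ x := hx.differentiable two_ne_zero
  have hcx : Continuous (deriv x) := hx.continuous_deriv one_le_two
  have hx1 : ContDiff ℝ 1 (deriv x) := by
    have h2 : ContDiff ℝ (1 + 1) x := by norm_num; exact hx
    rw [contDiff_succ_iff_deriv] at h2
    exact h2.2.2
  have hdx1 : Differentiable ℝ (deriv x) := hx1.differentiable one_ne_zero
  have hcx2 : Continuous (deriv (deriv x)) := hx1.continuous_deriv le_rfl
  set Y : ℝ → EuclideanSpace ℝ (Fin k) := fun t => (x t).2 with hYdef
  set Y' : ℝ → EuclideanSpace ℝ (Fin k) := fun t => (deriv x t).2 with hY'def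
  set Y'' : ℝ → EuclideanSpace ℝ (Fin k) := fun t => (deriv (deriv x) t).2 with hY''def
  have hYc : Continuous Y := hx.continuous.snd
  have hY'c : Continuous Y' := hcx.snd
  have hY''c : Continuous Y'' := hcx2.snd
  have hYd : ∀ t, HasDerivAt Y (Y' t) t := fun t =>
    (ContinuousLinearMap.snd ℝ ℝ (EuclideanSpace ℝ (Fin k))).hasFDerivAt.comp_hasDerivAt t
      (hdx t).hasDerivAt
  have hY'd : ∀ t, HasDerivAt Y' (Y'' t) t := fun t =>
    (ContinuousLinearMap.snd ℝ ℝ (EuclideanSpace ℝ (Fin k))).hasFDerivAt.comp_hasDerivAt t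
      (hdx1 t).hasDerivAt
  set f1 : ℝ → ℝ := fun t => ⟪Y t, Y' t⟫ + ⟪Y' t, Y t⟫ with hf1def
  set f2 : ℝ → ℝ := fun t => (⟪Y t, Y'' t⟫ + ⟪Y' t, Y' t⟫) + (⟪Y' t, Y' t⟫ + ⟪Y'' t, Y t⟫)
    with hf2def
  set G : ℝ → ℝ := fun t => ⟪Y t, Y t⟫ * (deriv x t).1 ^ 2 + ⟪Y' t, Y' t⟫
    + 2 * (⟪Y t, Y t⟫ * ⟪Y' t, Y' t⟫ - ⟪Y t, Y' t⟫ * ⟪Y t, Y' t⟫) with hGdef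
  have hf1d : ∀ t, HasDerivAt f1 (f2 t) t := fun t =>
    ((hYd t).inner ℝ (hY'd t)).add ((hY'd t).inner ℝ (hYd t))
  have hfd : ∀ t, HasDerivAt (fun t => ‖(x t).2‖ ^ 2) (f1 t) t := by
    intro t
    have h1 := (hYd t).inner ℝ (hYd t)
    have heq : (fun t => ⟪Y t, Y t⟫) = fun t => ‖(x t).2‖ ^ 2 := by
      funext t; rw [real_inner_self_eq_norm_sq]
    rw [heq] at h1
    convert h1 using 1
  have hf1c : Continuous f1 := (hYc.inner hY'c).add (hY'c.inner hYc)
  have hf2c : Continuous f2 :=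
    ((hYc.inner hY''c).add (hY'c.inner hY'c)).add ((hY'c.inner hY'c).add (hY''c.inner hYc))
  have hGc : Continuous G := by
    have h1 : Continuous fun t => ⟪Y t, Y t⟫ := hYc.inner hYc
    have h2 : Continuous fun t => ⟪Y' t, Y' t⟫ := hY'c.inner hY'c
    have h3 : Continuous fun t => ⟪Y t, Y' t⟫ := hYc.inner hY'c
    have h4 : Continuous fun t => (deriv x t).1 := hcx.fst
    rw [hGdef]; fun_prop
  have hG0 : ∀ t, 0 ≤ G t := by
    intro t
    have hcs := real_inner_mul_inner_self_le (Y t) (Y' t)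
    have h1 : (0:ℝ) ≤ ⟪Y t, Y t⟫ := real_inner_self_nonneg
    have h2 : (0:ℝ) ≤ ⟪Y' t, Y' t⟫ := real_inner_self_nonneg
    have h3 : (0:ℝ) ≤ (deriv x t).1 ^ 2 := sq_nonneg _
    have h4 : (0:ℝ) ≤ ⟪Y t, Y t⟫ * (deriv x t).1 ^ 2 := mul_nonneg h1 h3
    show (0:ℝ) ≤ ⟪Y t, Y t⟫ * (deriv x t).1 ^ 2 + ⟪Y' t, Y' t⟫
      + 2 * (⟪Y t, Y t⟫ * ⟪Y' t, Y' t⟫ - ⟪Y t, Y' t⟫ * ⟪Y t, Y' t⟫)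
    nlinarith
  -- the key weak Euler-Lagrange identity
  have key : ∀ φ : ℝ → ℝ, ContDiff ℝ 1 φ → φ t1 = 0 → φ t2 = 0 →
      (∫ t in t1..t2, φ t * (f2 t - 2 * G t)) = 0 := by
    intro φ hφ hφ1 hφ2
    have hφd : Differentiable ℝ φ := hφ.differentiable one_ne_zero
    have hφ'c : Continuous (deriv φ) := hφ.continuous_deriv le_rfl
    set v : ℝ → ℝ × EuclideanSpace ℝ (Fin k) := fun t => ((0:ℝ), φ t • Y t) with hvdef
    have hvC : ContDiff ℝ 1 v := contDiff_const.prodMk (hφ.smul (hx.snd.of_le one_le_two))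
    have hv1 : v t1 = 0 := by rw [hvdef]; simp [hφ1]
    have hv2 : v t2 = 0 := by rw [hvdef]; simp [hφ2]
    have hvd : ∀ t, deriv v t = ((0:ℝ), φ t • Y' t + deriv φ t • Y t) := fun t =>
      ((hasDerivAt_const t (0:ℝ)).prodMk (((hφd t).hasDerivAt.smul (hYd t)))).deriv
    have hED := energy_deriv t1 t2 x v hx hvC
    have h0 : (∫ t in t1..t2, cE1 k (x t) (v t) (deriv x t) (deriv v t)) = 0 :=
      (hED.unique (hcrit v hvC hv1 hv2))
    have hpt : ∀ t, cE1 k (x t) (v t) (deriv x t) (deriv v t)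
        = deriv φ t * f1 t + 2 * φ t * G t := by
      intro t
      rw [hvd t]
      simp only [cE1, hvdef, hf1def, hGdef]
      simp only [inner_add_left, inner_add_right, real_inner_smul_left, real_inner_smul_right]
      rw [real_inner_comm (Y' t) (Y t)]
      ring
    rw [show (fun t => cE1 k (x t) (v t) (deriv x t) (deriv v t))
        = fun t => deriv φ t * f1 t + 2 * φ t * G t from funext hpt] at h0
    have hIBP := integral_mul_deriv_eq_deriv_mul
      (u := f1) (v' := deriv φ) (u' := f2) (v := φ) (a := t1) (b := t2)
      (fun t _ => hf1d t) (fun t _ => (hφd t).hasDerivAt)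
      (hf2c.intervalIntegrable _ _) (hφ'c.intervalIntegrable _ _)
    rw [hφ1, hφ2] at hIBP
    simp only [mul_zero, zero_mul, sub_zero, zero_sub] at hIBP
    have hIa : IntervalIntegrable (fun t => deriv φ t * f1 t) MeasureTheory.volume t1 t2 :=
      ((hφ'c.mul hf1c).intervalIntegrable _ _)
    have hIb : IntervalIntegrable (fun t => 2 * φ t * G t) MeasureTheory.volume t1 t2 :=
      (((continuous_const.mul (hφ.continuous)).mul hGc).intervalIntegrable _ _)
    rw [integral_add hIa hIb] at h0
    have e1 : (∫ t in t1..t2, deriv φ t * f1 t) = ∫ t in t1..t2, f1 t * deriv φ t := by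
      congr 1; funext t; ring
    have e2 : (∫ t in t1..t2, φ t * (f2 t - 2 * G t))
        = (∫ t in t1..t2, f2 t * φ t) - ∫ t in t1..t2, 2 * φ t * G t := by
      rw [← integral_sub (f := fun t => f2 t * φ t) ((hf2c.mul hφ.continuous).intervalIntegrable _ _) hIb]
      congr 1; funext t; ring
    rw [e2]
    rw [e1, hIBP] at h0
    linarith
  -- pointwise Euler-Lagrange: f2 = 2G on the interior
  have hEL : ∀ t0 ∈ Set.Ioo t1 t2, f2 t0 - 2 * G t0 = 0 := by
    intro t0 ht0
    apply fund_zero ht (fun t => f2 t - 2 * G t)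
      (hf2c.sub (continuous_const.mul hGc)) _ ht0
    intro φ hφ hφ0
    exact key φ hφ (hφ0 t1 (by simp)) (hφ0 t2 (by simp))
  have hf2nn : ∀ t0 ∈ Set.Ioo t1 t2, 0 ≤ f2 t0 := by
    intro t0 ht0
    have := hEL t0 ht0
    have := hG0 t0
    linarith
  have hconv : ConvexOn ℝ (Set.Icc t1 t2) (fun t => ‖(x t).2‖ ^ 2) := by
    apply convexOn_of_hasDerivWithinAt2_nonneg (convex_Icc t1 t2)
      (f' := f1) (f'' := f2)
    · exact ((hYc.norm).pow 2).continuousOn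
    · intro t htI
      exact (hfd t).hasDerivWithinAt
    · intro t htI
      exact (hf1d t).hasDerivWithinAt
    · intro t htI
      rw [interior_Icc] at htI
      exact hf2nn t htI
  refine ⟨hconv, ?_⟩
  intro t htI
  have hseg : t ∈ segment ℝ t1 t2 := by
    rw [segment_eq_Icc ht.le]; exact htI
  have hle := hconv.le_on_segment (Set.left_mem_Icc.mpr ht.le) (Set.right_mem_Icc.mpr ht.le) hseg
  have hmax : max (‖(x t1).2‖ ^ 2) (‖(x t2).2‖ ^ 2) = (max ‖(x t1).2‖ ‖(x t2).2‖) ^ 2 := by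
    rcases le_total ‖(x t1).2‖ ‖(x t2).2‖ with h | h
    · rw [max_eq_right (pow_le_pow_left₀ (norm_nonneg _) h 2), max_eq_right h]
    · rw [max_eq_left (pow_le_pow_left₀ (norm_nonneg _) h 2), max_eq_left h]
  have h2 : ‖(x t).2‖ ^ 2 ≤ (max ‖(x t1).2‖ ‖(x t2).2‖) ^ 2 := by
    rw [← hmax]; exact hle
  have hmn : (0:ℝ) ≤ max ‖(x t1).2‖ ‖(x t2).2‖ := le_max_of_le_left (norm_nonneg _)
  exact (pow_le_pow_iff_left₀ (norm_nonneg _) hmn two_ne_zero).mp h2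
end
end

section
/- Let $x(t) = (\theta(t), y(t))$, $t \in [t_1, t_2]$, be a constant speed geodesic in $(\mathbb{R} \times \mathbb{R}^{n-2}, ds_h^2)$ with $ds_h^2 = (1+|y|^2) d\theta^2 + |dy|^2 + |y \wedge dy|^2$, and let $H = (t_2 - t_1)|\dot x|_h^2$ denote its energy and $m = \max\{|y(t_1)|, |y(t_2)|\}$. Then for every $t \in [t_1, t_2]$, $\dot\theta(t) - \frac{\theta(t_2) - \theta(t_1)}{t_2 - t_1} \ge -\frac{1}{2} H\, m$. -/
noncomputable section

open scoped RealInnerProductSpace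
open Set MeasureTheory intervalIntegral

section Aux
variable {E : Type*} [NormedAddCommGroup E] [InnerProductSpace ℝ E]

lemma expand2 (a b : E) (T c d s : ℝ) :
    (1 + ‖a + (s*c) • a‖^2) * T^2 + ‖b + s • (c • b + d • a)‖^2
      + (‖a + (s*c) • a‖^2 * ‖b + s • (c • b + d • a)‖^2
        - (inner ℝ (a + (s*c) • a) (b + s • (c • b + d • a)) : ℝ)^2)
  = (T^2 + ⟪a,a⟫*T^2 + ⟪b,b⟫ + (⟪a,a⟫*⟪b,b⟫ - ⟪a,b⟫^2))
    + (2*c*⟪a,a⟫*T^2 + 2*d*⟪a,b⟫ + 2*c*⟪b,b⟫ + 4*c*(⟪a,a⟫*⟪b,b⟫ - ⟪a,b⟫^2)) * s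
    + (c^2*⟪a,a⟫*T^2 + d^2*⟪a,a⟫ + 2*c*d*⟪a,b⟫ + c^2*⟪b,b⟫ + 6*c^2*(⟪a,a⟫*⟪b,b⟫ - ⟪a,b⟫^2)) * s^2
    + (4*c^3*(⟪a,a⟫*⟪b,b⟫ - ⟪a,b⟫^2)) * s^3
    + (c^4*(⟪a,a⟫*⟪b,b⟫ - ⟪a,b⟫^2)) * s^4 := by
  simp only [← real_inner_self_eq_norm_sq, inner_add_left, inner_add_right,
    real_inner_smul_left, real_inner_smul_right, real_inner_comm b a]
  ring

lemma poly_deriv (c0 c1 c2 c3 c4 : ℝ) :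
    HasDerivAt (fun s : ℝ => c0 + c1*s + c2*s^2 + c3*s^3 + c4*s^4) c1 0 := by
  have h : HasDerivAt (fun s : ℝ => c0 + c1*s + c2*s^2 + c3*s^3 + c4*s^4)
      (0 + (c1*1) + (c2*(2*0^1)) + (c3*(3*0^2)) + (c4*(4*0^3))) 0 :=
    ((((hasDerivAt_const 0 c0).add (((hasDerivAt_id 0).const_mul c1))).add
      (((hasDerivAt_pow 2 0)).const_mul c2)).add (((hasDerivAt_pow 3 0)).const_mul c3)).add
      (((hasDerivAt_pow 4 0)).const_mul c4)
  simpa using h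

lemma first_var (t1 t2 : ℝ) (F : ℝ → ℝ → ℝ) (A0 A1 A2 A3 A4 : ℝ → ℝ)
    (hF : ∀ s t, F s t = A0 t + A1 t * s + A2 t * s^2 + A3 t * s^3 + A4 t * s^4)
    (h0 : IntervalIntegrable A0 MeasureTheory.volume t1 t2)
    (h1 : IntervalIntegrable A1 MeasureTheory.volume t1 t2)
    (h2 : IntervalIntegrable A2 MeasureTheory.volume t1 t2)
    (h3 : IntervalIntegrable A3 MeasureTheory.volume t1 t2)
    (h4 : IntervalIntegrable A4 MeasureTheory.volume t1 t2)
    (hd : HasDerivAt (fun s => ∫ t in t1..t2, F s t) 0 0) :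
    (∫ t in t1..t2, A1 t) = 0 := by
  have key : ∀ s : ℝ, (∫ t in t1..t2, F s t)
      = (∫ t in t1..t2, A0 t) + (∫ t in t1..t2, A1 t)*s + (∫ t in t1..t2, A2 t)*s^2
        + (∫ t in t1..t2, A3 t)*s^3 + (∫ t in t1..t2, A4 t)*s^4 := by
    intro s
    rw [intervalIntegral.integral_congr (fun t _ => hF s t)]
    rw [integral_add (((h0.add (h1.mul_const s)).add (h2.mul_const (s^2))).add
        (h3.mul_const (s^3))) (h4.mul_const (s^4)),
      integral_add ((h0.add (h1.mul_const s)).add (h2.mul_const (s^2))) (h3.mul_const (s^3)),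
      integral_add (h0.add (h1.mul_const s)) (h2.mul_const (s^2)),
      integral_add h0 (h1.mul_const s),
      intervalIntegral.integral_mul_const, intervalIntegral.integral_mul_const,
      intervalIntegral.integral_mul_const, intervalIntegral.integral_mul_const]
  have hp := poly_deriv (∫ t in t1..t2, A0 t) (∫ t in t1..t2, A1 t) (∫ t in t1..t2, A2 t)
    (∫ t in t1..t2, A3 t) (∫ t in t1..t2, A4 t)
  have : HasDerivAt (fun s => ∫ t in t1..t2, F s t) (∫ t in t1..t2, A1 t) 0 := by
    simpa [← key] using hp
  exact this.unique hd

lemma bump_pos {t1 t2 : ℝ} {G : ℝ → ℝ} (hG : Continuous G)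
    {t0 : ℝ} (ht0 : t0 ∈ Set.Ioo t1 t2) (hpos : 0 < G t0) :
    ∃ φ : ℝ → ℝ, ContDiff ℝ 1 φ ∧ (∀ t, 0 ≤ φ t) ∧ φ t1 = 0 ∧ φ t2 = 0 ∧
      0 < ∫ t in t1..t2, φ t * G t := by
  obtain ⟨δ, hδpos, hball⟩ : ∃ δ > 0, Metric.ball t0 δ ⊆ Ioo t1 t2 ∩ {u | G t0 / 2 < G u} := by
    have hop : IsOpen (Ioo t1 t2 ∩ {u | G t0 / 2 < G u}) :=
      isOpen_Ioo.inter (isOpen_lt continuous_const hG)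
    have hmem : t0 ∈ Ioo t1 t2 ∩ {u | G t0 / 2 < G u} := ⟨ht0, by simpa using by linarith⟩
    exact Metric.isOpen_iff.mp hop t0 hmem
  set f : ContDiffBump t0 := ⟨δ/2, δ, by linarith, by linarith⟩
  have hsupp : Function.support f = Metric.ball t0 δ := f.support_eq
  have hφ : ∀ t, t ∉ Metric.ball t0 δ → (f t : ℝ) = 0 := by
    intro t htm
    by_contra h
    exact htm (hsupp ▸ Function.mem_support.mpr h)
  have hnn : ∀ t, 0 ≤ (f t) * G t := by
    intro t
    rcases le_or_gt δ (dist t t0) with h | h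
    · rw [hφ t (by simpa [Metric.mem_ball] using h)]; simp
    · have := (hball (Metric.mem_ball.mpr h)).2
      exact mul_nonneg f.nonneg (by simp at this ⊢; nlinarith)
  have hcont : Continuous fun t => (f t) * G t := f.continuous.mul hG
  have hab : t1 ≤ t0 - δ/2 ∧ t0 + δ/2 ≤ t2 := by
    have h1 : t0 - δ/2 ∈ Metric.ball t0 δ := by
      simp only [Metric.mem_ball, Real.dist_eq, abs_lt]; constructor <;> linarith
    have h2 : t0 + δ/2 ∈ Metric.ball t0 δ := by
      simp only [Metric.mem_ball, Real.dist_eq, abs_lt]; constructor <;> linarith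
    exact ⟨(hball h1).1.1.le, (hball h2).1.2.le⟩
  refine ⟨f, f.contDiff, fun t => f.nonneg, ?_, ?_, ?_⟩
  · exact hφ t1 (by intro hm; exact absurd (hball hm).1.1 (lt_irrefl _))
  · exact hφ t2 (by intro hm; exact absurd (hball hm).1.2 (lt_irrefl _))
  · have key : ∀ a b, t1 ≤ a → a ≤ b → b ≤ t2 →
        (∫ t in a..b, (f t) * G t) ≤ ∫ t in t1..t2, (f t) * G t := by
      intro a b h1 h2 h3
      have i1 : IntervalIntegrable (fun t => (f t)*G t) volume t1 a :=
        hcont.intervalIntegrable _ _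
      have i2 : IntervalIntegrable (fun t => (f t)*G t) volume a b :=
        hcont.intervalIntegrable _ _
      have i3 : IntervalIntegrable (fun t => (f t)*G t) volume b t2 :=
        hcont.intervalIntegrable _ _
      rw [← integral_add_adjacent_intervals (i1.trans i2) i3,
          ← integral_add_adjacent_intervals i1 i2]
      have n1 : 0 ≤ ∫ t in t1..a, (f t)*G t := integral_nonneg h1 (fun u _ => hnn u)
      have n3 : 0 ≤ ∫ t in b..t2, (f t)*G t := integral_nonneg h3 (fun u _ => hnn u)
      linarith
    have hmid : (δ/2) * (G t0 / 2) ≤ ∫ t in (t0-δ/2)..(t0+δ/2), (f t) * G t := by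
      have hone : ∀ u ∈ Set.Icc (t0-δ/2) (t0+δ/2), G t0 / 2 ≤ (f u) * G u := by
        intro u hu
        have hu' : u ∈ Metric.closedBall t0 (δ/2) := by
          simp only [Metric.mem_closedBall, Real.dist_eq, abs_le]
          constructor <;> [linarith [hu.1]; linarith [hu.2]]
        have h1 : (f u : ℝ) = 1 := f.one_of_mem_closedBall hu'
        have hub : u ∈ Metric.ball t0 δ :=
          Metric.mem_ball.mpr (lt_of_le_of_lt (Metric.mem_closedBall.mp hu') (by linarith))
        have := (hball hub).2
        simp at this
        rw [h1]; linarith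
      have hmono := intervalIntegral.integral_mono_on
        (by linarith : t0 - δ/2 ≤ t0 + δ/2)
        (_root_.intervalIntegrable_const (μ := volume) (c := G t0/2))
        (hcont.intervalIntegrable _ _) hone
      rw [intervalIntegral.integral_const, smul_eq_mul] at hmono
      nlinarith [hmono]
    have := key (t0-δ/2) (t0+δ/2) hab.1 (by linarith) hab.2
    nlinarith [hmid, hδpos, hpos]

lemma fund_lemma {t1 t2 : ℝ} (ht : t1 < t2) {G : ℝ → ℝ} (hG : Continuous G)
    (h : ∀ φ : ℝ → ℝ, ContDiff ℝ 1 φ → φ t1 = 0 → φ t2 = 0 →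
      (∫ t in t1..t2, φ t * G t) = 0) :
    ∀ t ∈ Set.Icc t1 t2, G t = 0 := by
  have hIoo : ∀ t ∈ Set.Ioo t1 t2, G t = 0 := by
    intro t0 ht0
    by_contra hne
    rcases lt_or_gt_of_ne hne with hlt | hgt
    · obtain ⟨φ, hφ1, _, hφ3, hφ4, hφ5⟩ := bump_pos (hG.neg) ht0 (by simpa using by linarith)
      have hz := h φ hφ1 hφ3 hφ4
      have hneg : (∫ t in t1..t2, φ t * -G t) = -∫ t in t1..t2, φ t * G t := by
        rw [← intervalIntegral.integral_neg]
        apply intervalIntegral.integral_congr; intro u _; ring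
      simp only [Pi.neg_apply] at hφ5
      rw [hneg, hz] at hφ5; simp at hφ5
    · obtain ⟨φ, hφ1, _, hφ3, hφ4, hφ5⟩ := bump_pos hG ht0 hgt
      have := h φ hφ1 hφ3 hφ4
      linarith
  intro t htm
  have hcl : Set.EqOn G 0 (closure (Set.Ioo t1 t2)) :=
    Set.EqOn.closure (fun u hu => hIoo u hu) hG continuous_zero
  have := hcl (by rw [closure_Ioo ht.ne]; exact htm)
  simpa using this

lemma bound_aux (G N I T D m c : ℝ) (hG0 : 0 ≤ G) (hN0 : 0 ≤ N) (hCS : I^2 ≤ G*N)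
    (hGm : G ≤ m^2) (hm : 0 ≤ m) (hc : (1+G)*T^2 + N ≤ c)
    (hEL : (1+G)*D = -(2*I*T)) : |D| ≤ m*c := by
  have hc0 : 0 ≤ c := le_trans (by positivity) hc
  have h1 : ((1+G)*D)^2 = 4*(I^2*T^2) := by rw [hEL]; ring
  have h2a : I^2*T^2 ≤ G*N*T^2 := mul_le_mul_of_nonneg_right hCS (sq_nonneg T)
  have h2b : G*N*T^2 ≤ m^2*N*T^2 :=
    mul_le_mul_of_nonneg_right (mul_le_mul_of_nonneg_right hGm hN0) (sq_nonneg T)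
  have hS : (1+G)*((1+G)*T^2+N) ≤ (1+G)*c := mul_le_mul_of_nonneg_left hc (by linarith)
  have hSnn : 0 ≤ (1+G)*((1+G)*T^2+N) := by positivity
  have hsq : ((1+G)*((1+G)*T^2+N))^2 ≤ ((1+G)*c)^2 := pow_le_pow_left₀ hSnn hS 2
  have e0 : 0 ≤ ((1+G)-1)*((1+G)^2+2*(1+G)+2) := mul_nonneg (by linarith) (by positivity)
  have e1 : 0 ≤ N*T^2*((1+G)^3+(1+G)^2-2) :=
    mul_nonneg (mul_nonneg hN0 (sq_nonneg T)) (by nlinarith [e0])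
  have e2 : 0 ≤ N^2*((1+G)^2-1) :=
    mul_nonneg (sq_nonneg N) (by nlinarith [mul_nonneg hG0 (show (0:ℝ) ≤ G+2 by linarith)])
  have h3 : 4*(N*T^2) ≤ ((1+G)*((1+G)*T^2+N))^2 := by
    nlinarith [sq_nonneg ((1+G)^2*T^2 - N), e1, e2]
  have h4 : 4*(N*T^2) ≤ ((1+G)*c)^2 := h3.trans hsq
  have h5 := mul_le_mul_of_nonneg_left h4 (sq_nonneg m)
  have hkey : ((1+G)*D)^2 ≤ ((1+G)*(m*c))^2 := by nlinarith [h5, h1, h2a, h2b]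
  have hBnn : 0 ≤ (1+G)*(m*c) := by positivity
  have habs : |(1+G)*D| ≤ (1+G)*(m*c) := by
    have h' : |(1+G)*D|^2 ≤ ((1+G)*(m*c))^2 := by rwa [sq_abs]
    exact (pow_le_pow_iff_left₀ (abs_nonneg _) hBnn (by norm_num)).mp h'
  have h1G : (0:ℝ) < 1 + G := by linarith
  have hfin : (1+G)*|D| ≤ (1+G)*(m*c) := by
    calc (1+G)*|D| = |(1+G)*D| := by rw [abs_mul, abs_of_pos h1G]
      _ ≤ _ := habs
  exact le_of_mul_le_mul_left hfin h1G

end Aux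

set_option maxHeartbeats 1000000 in
/-- Let `x(t) = (θ(t), y(t))`, `t ∈ [t1,t2]`, be a constant speed
geodesic of `ds_h² = (1+|y|²)dθ² + |dy|² + |y∧dy|²` (a constant-speed critical point of
the energy), let `H = (t2-t1)|ẋ|_h²` be its energy and `m = max(|y(t1)|,|y(t2)|)`.
Then for every `t ∈ [t1,t2]`,
`θ'(t) - (θ(t2)-θ(t1))/(t2-t1) ≥ -½ H m`. -/
theorem stmt7 (k : ℕ) (t1 t2 : ℝ) (ht : t1 < t2)
    (x : ℝ → ℝ × EuclideanSpace ℝ (Fin k)) (hx : ContDiff ℝ 2 x) (c : ℝ)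
    (hspeed : ∀ t, hQ k (x t) (deriv x t) = c)
    (hcrit : ∀ v : ℝ → ℝ × EuclideanSpace ℝ (Fin k), ContDiff ℝ 1 v →
      v t1 = 0 → v t2 = 0 →
      HasDerivAt (fun s : ℝ => energy k t1 t2 (fun t => x t + s • v t)) 0 0) :
    ∀ t ∈ Set.Icc t1 t2,
      deriv (fun u => (x u).1) t - ((x t2).1 - (x t1).1) / (t2 - t1)
        ≥ -(1 / 2) * ((t2 - t1) * c) * max ‖(x t1).2‖ ‖(x t2).2‖ := by
  intro t htIcc
  have hD : (0:ℝ) < t2 - t1 := by linarith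
  -- smoothness infrastructure
  have hx2 : ContDiff ℝ ((1:ℕ∞)+1) x := by norm_num; exact hx
  have hxdiff : Differentiable ℝ x := (contDiff_succ_iff_deriv.mp hx2).1
  have hxd1 : ContDiff ℝ 1 (deriv x) := (contDiff_succ_iff_deriv.mp hx2).2.2
  have hxd1' : ContDiff ℝ ((0:ℕ∞)+1) (deriv x) := by norm_num; exact hxd1
  have hxddiff : Differentiable ℝ (deriv x) := (contDiff_succ_iff_deriv.mp hxd1').1
  have cxd : Continuous (deriv x) := hxd1.continuous
  have cxdd : Continuous (deriv (deriv x)) := ((contDiff_succ_iff_deriv.mp hxd1').2.2).continuous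
  have hxD : ∀ u, HasDerivAt x (deriv x u) u := fun u => (hxdiff u).hasDerivAt
  have hxdD : ∀ u, HasDerivAt (deriv x) (deriv (deriv x) u) u := fun u => (hxddiff u).hasDerivAt
  have hΘD : ∀ u, HasDerivAt (fun w => (x w).1) ((deriv x u).1) u := fun u =>
    (ContinuousLinearMap.fst ℝ ℝ (EuclideanSpace ℝ (Fin k))).hasFDerivAt.comp_hasDerivAt u (hxD u)
  have hYD : ∀ u, HasDerivAt (fun w => (x w).2) ((deriv x u).2) u := fun u =>
    (ContinuousLinearMap.snd ℝ ℝ (EuclideanSpace ℝ (Fin k))).hasFDerivAt.comp_hasDerivAt u (hxD u)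
  have hΘdD : ∀ u, HasDerivAt (fun w => (deriv x w).1) ((deriv (deriv x) u).1) u := fun u =>
    (ContinuousLinearMap.fst ℝ ℝ (EuclideanSpace ℝ (Fin k))).hasFDerivAt.comp_hasDerivAt u (hxdD u)
  have hYdD : ∀ u, HasDerivAt (fun w => (deriv x w).2) ((deriv (deriv x) u).2) u := fun u =>
    (ContinuousLinearMap.snd ℝ ℝ (EuclideanSpace ℝ (Fin k))).hasFDerivAt.comp_hasDerivAt u (hxdD u)
  -- abbreviations
  set Θd : ℝ → ℝ := fun u => (deriv x u).1 with hdΘd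
  set Θdd : ℝ → ℝ := fun u => (deriv (deriv x) u).1 with hdΘdd
  set Gf : ℝ → ℝ := fun u => (⟪(x u).2, (x u).2⟫:ℝ) with hdGf
  set If : ℝ → ℝ := fun u => (⟪(x u).2, (deriv x u).2⟫:ℝ) with hdIf
  set Nf : ℝ → ℝ := fun u => (⟪(deriv x u).2, (deriv x u).2⟫:ℝ) with hdNf
  set Y2f : ℝ → ℝ := fun u => (⟪(x u).2, (deriv (deriv x) u).2⟫:ℝ) with hdY2f
  -- continuity
  have cY : Continuous fun u => (x u).2 := hx.continuous.snd
  have cΘd : Continuous Θd := cxd.fst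
  have cΘdd : Continuous Θdd := cxdd.fst
  have cYd : Continuous fun u => (deriv x u).2 := cxd.snd
  have cYdd : Continuous fun u => (deriv (deriv x) u).2 := cxdd.snd
  have cG : Continuous Gf := cY.inner cY
  have cI : Continuous If := cY.inner cYd
  have cN : Continuous Nf := cYd.inner cYd
  have cY2 : Continuous Y2f := cY.inner cYdd
  -- derivatives of scalar functions
  have hGD : ∀ u, HasDerivAt Gf (2*If u) u := by
    intro u
    have h := (hYD u).inner ℝ (hYD u)
    have : (⟪(x u).2, (deriv x u).2⟫:ℝ) + ⟪(deriv x u).2, (x u).2⟫ = 2*If u := by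
      simp only [hdIf]; rw [real_inner_comm ((deriv x u).2) ((x u).2)]; ring
    rw [← this]
    exact h
  have hID : ∀ u, HasDerivAt If (Nf u + Y2f u) u := by
    intro u
    have h := (hYD u).inner ℝ (hYdD u)
    have : (⟪(x u).2, (deriv (deriv x) u).2⟫:ℝ) + ⟪(deriv x u).2, (deriv x u).2⟫
        = Nf u + Y2f u := by simp only [hdNf, hdY2f]; ring
    rw [← this]
    exact h
  -- speed identity in coordinates
  have hcid : ∀ u, (1+Gf u)*(Θd u)^2 + Nf u + (Gf u*Nf u - (If u)^2) = c := by
    intro u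
    have h := hspeed u
    simp only [hQ, ← real_inner_self_eq_norm_sq] at h
    simp only [hdGf, hdIf, hdNf, hdΘd]
    linear_combination h
  have hGnn : ∀ u, 0 ≤ Gf u := fun u => by simp only [hdGf]; exact real_inner_self_nonneg
  have hNnn : ∀ u, 0 ≤ Nf u := fun u => by simp only [hdNf]; exact real_inner_self_nonneg
  have hCS : ∀ u, (If u)^2 ≤ Gf u * Nf u := by
    intro u
    simp only [hdGf, hdIf, hdNf, sq]
    exact real_inner_mul_inner_self_le _ _
  have hc0 : 0 ≤ c := by
    nlinarith [hcid t1, hCS t1, hNnn t1,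
      mul_nonneg (by linarith [hGnn t1] : (0:ℝ) ≤ 1+Gf t1) (sq_nonneg (Θd t1))]
  -- weak identity from variations in the θ direction
  have hweak1 : ∀ φ : ℝ → ℝ, ContDiff ℝ 1 φ → φ t1 = 0 → φ t2 = 0 →
      (∫ u in t1..t2, (deriv φ u) * (2*(1+Gf u)*Θd u)) = 0 := by
    intro φ hφ h1 h2
    have hφD : ∀ u, HasDerivAt φ (deriv φ u) u := fun u => (hφ.differentiable one_ne_zero u).hasDerivAt
    have hφdc : Continuous (deriv φ) := hφ.continuous_deriv le_rfl
    have hvD : ∀ u, HasDerivAt (fun w => ((φ w, 0) : ℝ × EuclideanSpace ℝ (Fin k)))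
        ((deriv φ u, 0) : ℝ × EuclideanSpace ℝ (Fin k)) u :=
      fun u => (hφD u).prodMk (hasDerivAt_const u 0)
    have hzD : ∀ (s : ℝ) u, deriv (fun w => x w + s • ((φ w, 0) : ℝ × EuclideanSpace ℝ (Fin k))) u
        = deriv x u + s • ((deriv φ u, 0) : ℝ × EuclideanSpace ℝ (Fin k)) :=
      fun s u => ((hxD u).add ((hvD u).const_smul s)).deriv
    have hF : ∀ (s : ℝ) u, (hQ k (x u + s • ((φ u, 0) : ℝ × EuclideanSpace ℝ (Fin k)))
        (deriv (fun w => x w + s • ((φ w, 0) : ℝ × EuclideanSpace ℝ (Fin k))) u))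
        = ((1+Gf u)*(Θd u)^2 + Nf u + (Gf u*Nf u - (If u)^2))
          + ((deriv φ u) * (2*(1+Gf u)*Θd u)) * s
          + ((1+Gf u)*(deriv φ u)^2) * s^2 + 0 * s^3 + 0 * s^4 := by
      intro s u
      rw [hzD s u]
      simp only [hQ, Prod.fst_add, Prod.snd_add, Prod.smul_fst, Prod.smul_snd,
        smul_eq_mul, smul_zero, mul_zero, add_zero, ← real_inner_self_eq_norm_sq]
      simp only [hdGf, hdNf, hdIf, hdΘd]
      ring
    have hd := hcrit (fun w => ((φ w, 0) : ℝ × EuclideanSpace ℝ (Fin k)))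
      (hφ.prodMk contDiff_const) (by simp [Prod.ext_iff, h1]) (by simp [Prod.ext_iff, h2])
    simp only [energy] at hd
    have hfv := first_var t1 t2
      (fun s u => hQ k (x u + s • ((φ u, 0) : ℝ × EuclideanSpace ℝ (Fin k)))
        (deriv (fun w => x w + s • ((φ w, 0) : ℝ × EuclideanSpace ℝ (Fin k))) u))
      (fun u => (1+Gf u)*(Θd u)^2 + Nf u + (Gf u*Nf u - (If u)^2))
      (fun u => (deriv φ u) * (2*(1+Gf u)*Θd u))
      (fun u => (1+Gf u)*(deriv φ u)^2) (fun _ => 0) (fun _ => 0)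
      hF
      (((((continuous_const.add cG).mul (cΘd.pow 2)).add cN).add ((cG.mul cN).sub
        (cI.pow 2))).intervalIntegrable _ _)
      ((hφdc.mul ((continuous_const.mul (continuous_const.add cG)).mul
        cΘd)).intervalIntegrable _ _)
      (((continuous_const.add cG).mul (hφdc.pow 2)).intervalIntegrable _ _)
      (continuous_const.intervalIntegrable _ _)
      (continuous_const.intervalIntegrable _ _)
      hd
    exact hfv
  -- Euler-Lagrange equation for θ
  have hEL1 : ∀ u ∈ Set.Icc t1 t2, 2*(2*If u*Θd u + (1+Gf u)*Θdd u) = 0 := by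
    apply fund_lemma ht
    · exact continuous_const.mul (((continuous_const.mul cI).mul cΘd).add
        ((continuous_const.add cG).mul cΘdd))
    intro φ hφ h1 h2
    have hφD : ∀ u, HasDerivAt φ (deriv φ u) u := fun u => (hφ.differentiable one_ne_zero u).hasDerivAt
    have hφdc : Continuous (deriv φ) := hφ.continuous_deriv le_rfl
    have hf2D : ∀ u ∈ Set.uIcc t1 t2, HasDerivAt (fun w => 2*(1+Gf w)*Θd w)
        (2*(2*If u*Θd u + (1+Gf u)*Θdd u)) u := by
      intro u _
      have h1' : HasDerivAt (fun w => 1 + Gf w) (2*If u) u := (hGD u).const_add 1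
      have h2' := (h1'.mul (hΘdD u)).const_mul 2
      have hval : 2*(2*If u * Θd u + (1+Gf u)*(deriv (deriv x) u).1)
          = 2*(2*If u*Θd u + (1+Gf u)*Θdd u) := by simp only [hdΘdd]
      rw [← hval]
      simpa [mul_assoc] using h2'
    have ibp := intervalIntegral.integral_mul_deriv_eq_deriv_mul
      (fun u _ => hφD u) hf2D (hφdc.intervalIntegrable _ _)
      ((continuous_const.mul (((continuous_const.mul cI).mul cΘd).add
        ((continuous_const.add cG).mul cΘdd))).intervalIntegrable _ _)
    rw [h1, h2, hweak1 φ hφ h1 h2] at ibp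
    simpa using ibp
  -- weak identity from variations in the y direction
  have hy1 : ContDiff ℝ 1 fun w => (x w).2 := (hx.of_le one_le_two).snd
  have hweak2 : ∀ φ : ℝ → ℝ, ContDiff ℝ 1 φ → φ t1 = 0 → φ t2 = 0 →
      (∫ u in t1..t2, ((deriv φ u)*(2*If u)
        + φ u * (2*Gf u*(Θd u)^2 + 2*Nf u + 4*(Gf u*Nf u - (If u)^2)))) = 0 := by
    intro φ hφ h1 h2
    have hφD : ∀ u, HasDerivAt φ (deriv φ u) u := fun u => (hφ.differentiable one_ne_zero u).hasDerivAt
    have hφdc : Continuous (deriv φ) := hφ.continuous_deriv le_rfl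
    have hφc : Continuous φ := hφ.continuous
    have hvD : ∀ u, HasDerivAt (fun w => (((0:ℝ), φ w • (x w).2) : ℝ × EuclideanSpace ℝ (Fin k)))
        (((0:ℝ), φ u • (deriv x u).2 + deriv φ u • (x u).2) : ℝ × EuclideanSpace ℝ (Fin k)) u :=
      fun u => (hasDerivAt_const u (0:ℝ)).prodMk ((hφD u).smul (hYD u))
    have hzD : ∀ (s : ℝ) u,
        deriv (fun w => x w + s • (((0:ℝ), φ w • (x w).2) : ℝ × EuclideanSpace ℝ (Fin k))) u
        = deriv x u + s • (((0:ℝ), φ u • (deriv x u).2 + deriv φ u • (x u).2)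
            : ℝ × EuclideanSpace ℝ (Fin k)) :=
      fun s u => ((hxD u).add ((hvD u).const_smul s)).deriv
    have hF : ∀ (s : ℝ) u, (hQ k
        (x u + s • (((0:ℝ), φ u • (x u).2) : ℝ × EuclideanSpace ℝ (Fin k)))
        (deriv (fun w => x w + s • (((0:ℝ), φ w • (x w).2) : ℝ × EuclideanSpace ℝ (Fin k))) u))
        = ((Θd u)^2 + Gf u*(Θd u)^2 + Nf u + (Gf u*Nf u - (If u)^2))
          + ((deriv φ u)*(2*If u)
            + φ u * (2*Gf u*(Θd u)^2 + 2*Nf u + 4*(Gf u*Nf u - (If u)^2))) * s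
          + ((φ u)^2*Gf u*(Θd u)^2 + (deriv φ u)^2*Gf u + 2*(φ u*(deriv φ u))*If u
            + (φ u)^2*Nf u + 6*(φ u)^2*(Gf u*Nf u - (If u)^2)) * s^2
          + (4*(φ u)^3*(Gf u*Nf u - (If u)^2)) * s^3
          + ((φ u)^4*(Gf u*Nf u - (If u)^2)) * s^4 := by
      intro s u
      rw [hzD s u]
      simp only [hQ, Prod.fst_add, Prod.snd_add, Prod.smul_fst, Prod.smul_snd,
        smul_eq_mul, mul_zero, add_zero, smul_smul]
      simp only [hdGf, hdNf, hdIf, hdΘd]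
      linear_combination (expand2 ((x u).2) ((deriv x u).2) ((deriv x u).1) (φ u) (deriv φ u) s)
    have hd := hcrit (fun w => (((0:ℝ), φ w • (x w).2) : ℝ × EuclideanSpace ℝ (Fin k)))
      (contDiff_const.prodMk (hφ.smul hy1)) (by simp [Prod.ext_iff, h1]) (by simp [Prod.ext_iff, h2])
    simp only [energy] at hd
    have cQ : Continuous fun u => Gf u*Nf u - (If u)^2 := (cG.mul cN).sub (cI.pow 2)
    exact first_var t1 t2
      (fun s u => hQ k (x u + s • (((0:ℝ), φ u • (x u).2) : ℝ × EuclideanSpace ℝ (Fin k)))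
        (deriv (fun w => x w + s • (((0:ℝ), φ w • (x w).2) : ℝ × EuclideanSpace ℝ (Fin k))) u))
      (fun u => (Θd u)^2 + Gf u*(Θd u)^2 + Nf u + (Gf u*Nf u - (If u)^2))
      (fun u => (deriv φ u)*(2*If u)
        + φ u * (2*Gf u*(Θd u)^2 + 2*Nf u + 4*(Gf u*Nf u - (If u)^2)))
      (fun u => (φ u)^2*Gf u*(Θd u)^2 + (deriv φ u)^2*Gf u + 2*(φ u*(deriv φ u))*If u
        + (φ u)^2*Nf u + 6*(φ u)^2*(Gf u*Nf u - (If u)^2))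
      (fun u => 4*(φ u)^3*(Gf u*Nf u - (If u)^2))
      (fun u => (φ u)^4*(Gf u*Nf u - (If u)^2))
      hF
      (((((cΘd.pow 2).add (cG.mul (cΘd.pow 2))).add cN).add cQ).intervalIntegrable _ _)
      (((hφdc.mul (continuous_const.mul cI)).add (hφc.mul
        ((((continuous_const.mul cG).mul (cΘd.pow 2)).add (continuous_const.mul cN)).add
          (continuous_const.mul cQ)))).intervalIntegrable _ _)
      ((((((((hφc.pow 2).mul cG).mul (cΘd.pow 2)).add ((hφdc.pow 2).mul cG)).add
        ((continuous_const.mul (hφc.mul hφdc)).mul cI)).add ((hφc.pow 2).mul cN)).add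
        ((continuous_const.mul (hφc.pow 2)).mul cQ)).intervalIntegrable _ _)
      (((continuous_const.mul (hφc.pow 3)).mul cQ).intervalIntegrable _ _)
      (((hφc.pow 4).mul cQ).intervalIntegrable _ _)
      hd
  -- Euler-Lagrange equation for y, dotted with y
  have cQ : Continuous fun u => Gf u*Nf u - (If u)^2 := (cG.mul cN).sub (cI.pow 2)
  have cP : Continuous fun u => 2*Gf u*(Θd u)^2 + 2*Nf u + 4*(Gf u*Nf u - (If u)^2) :=
    (((continuous_const.mul cG).mul (cΘd.pow 2)).add (continuous_const.mul cN)).add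
      (continuous_const.mul cQ)
  have hEL2 : ∀ u ∈ Set.Icc t1 t2,
      (2*Gf u*(Θd u)^2 + 2*Nf u + 4*(Gf u*Nf u - (If u)^2)) - 2*(Nf u + Y2f u) = 0 := by
    apply fund_lemma ht (cP.sub (continuous_const.mul (cN.add cY2)))
    intro φ hφ h1 h2
    have hφD : ∀ u, HasDerivAt φ (deriv φ u) u := fun u => (hφ.differentiable one_ne_zero u).hasDerivAt
    have hφdc : Continuous (deriv φ) := hφ.continuous_deriv le_rfl
    have hφc : Continuous φ := hφ.continuous
    have hIder : ∀ u ∈ Set.uIcc t1 t2, HasDerivAt (fun w => 2*If w) (2*(Nf u + Y2f u)) u :=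
      fun u _ => (hID u).const_mul 2
    have ibp := intervalIntegral.integral_mul_deriv_eq_deriv_mul
      (fun u _ => hφD u) hIder (hφdc.intervalIntegrable _ _)
      ((continuous_const.mul (cN.add cY2)).intervalIntegrable _ _)
    rw [h1, h2] at ibp
    simp only [zero_mul, sub_zero, zero_sub] at ibp
    have i1 : IntervalIntegrable (fun u => (deriv φ u)*(2*If u)) volume t1 t2 :=
      (hφdc.mul (continuous_const.mul cI)).intervalIntegrable _ _
    have i2 : IntervalIntegrable
        (fun u => φ u * (2*Gf u*(Θd u)^2 + 2*Nf u + 4*(Gf u*Nf u - (If u)^2))) volume t1 t2 :=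
      (hφc.mul cP).intervalIntegrable _ _
    have i3 : IntervalIntegrable (fun u => φ u * (2*(Nf u + Y2f u))) volume t1 t2 :=
      (hφc.mul (continuous_const.mul (cN.add cY2))).intervalIntegrable _ _
    have hadd := integral_add i1 i2
    have hw := hweak2 φ hφ h1 h2
    have hcong : (∫ u in t1..t2,
        φ u * ((2*Gf u*(Θd u)^2 + 2*Nf u + 4*(Gf u*Nf u - (If u)^2)) - 2*(Nf u + Y2f u)))
        = ∫ u in t1..t2, (φ u * (2*Gf u*(Θd u)^2 + 2*Nf u + 4*(Gf u*Nf u - (If u)^2))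
            - φ u * (2*(Nf u + Y2f u))) :=
      intervalIntegral.integral_congr (fun u _ => by ring)
    show (∫ u in t1..t2,
        φ u * ((2*Gf u*(Θd u)^2 + 2*Nf u + 4*(Gf u*Nf u - (If u)^2)) - 2*(Nf u + Y2f u))) = 0
    rw [hcong, integral_sub i2 i3]
    linarith [ibp, hadd, hw]
  -- convexity of |y|^2 and the bound G ≤ m²
  have hderivG : deriv Gf = fun u => 2*If u := funext fun u => (hGD u).deriv
  have hderiv2G : ∀ u, deriv (deriv Gf) u = 2*(Nf u + Y2f u) := by
    intro u; rw [hderivG]; exact ((hID u).const_mul 2).deriv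
  have hP0 : ∀ u ∈ Set.Icc t1 t2, 0 ≤ 2*(Nf u + Y2f u) := by
    intro u hu
    have hW := hEL2 u hu
    nlinarith [hCS u, hNnn u, mul_nonneg (hGnn u) (sq_nonneg (Θd u))]
  have hconv : ConvexOn ℝ (Set.Icc t1 t2) Gf := by
    apply convexOn_of_deriv2_nonneg (convex_Icc t1 t2) cG.continuousOn
      (fun u _ => (hGD u).differentiableAt.differentiableWithinAt) ?_ ?_
    · rw [hderivG]
      exact fun u _ => ((hID u).const_mul 2).differentiableAt.differentiableWithinAt
    · intro u hu
      have h2 : deriv^[2] Gf u = 2*(Nf u + Y2f u) := by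
        calc deriv^[2] Gf u = deriv (deriv Gf) u := by
              rw [show (2:ℕ) = 1+1 from rfl, Function.iterate_succ_apply,
                Function.iterate_one]
          _ = 2*(Nf u + Y2f u) := hderiv2G u
      rw [h2]
      exact hP0 u (interior_subset hu)
  set m : ℝ := max ‖(x t1).2‖ ‖(x t2).2‖ with hdm
  have hm0 : (0:ℝ) ≤ m := le_trans (norm_nonneg _) (le_max_left _ _)
  have hGm : ∀ u ∈ Set.Icc t1 t2, Gf u ≤ m^2 := by
    intro u hu
    have hseg := hconv.le_on_segment (left_mem_Icc.mpr ht.le) (right_mem_Icc.mpr ht.le)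
      (by rwa [segment_eq_Icc ht.le])
    have e1 : Gf t1 ≤ m^2 := by
      have he : Gf t1 = ‖(x t1).2‖^2 := by simp only [hdGf]; exact real_inner_self_eq_norm_sq _
      rw [he, hdm]
      exact pow_le_pow_left₀ (norm_nonneg _) (le_max_left _ _) 2
    have e2 : Gf t2 ≤ m^2 := by
      have he : Gf t2 = ‖(x t2).2‖^2 := by simp only [hdGf]; exact real_inner_self_eq_norm_sq _
      rw [he, hdm]
      exact pow_le_pow_left₀ (norm_nonneg _) (le_max_right _ _) 2
    exact le_trans hseg (max_le e1 e2)
  -- bound on θ''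
  have hbd : ∀ u ∈ Set.Icc t1 t2, |Θdd u| ≤ m*c := by
    intro u hu
    refine bound_aux (Gf u) (Nf u) (If u) (Θd u) (Θdd u) m c (hGnn u) (hNnn u) (hCS u)
      (hGm u hu) hm0 ?_ ?_
    · linarith [hcid u, hCS u]
    · linarith [hEL1 u hu]
  have hmc0 : 0 ≤ m*c := mul_nonneg hm0 hc0
  -- final assembly
  have hθder : deriv (fun w => (x w).1) t = Θd t := by
    simp only [hdΘd]; exact (hΘD t).deriv
  have hFTC : (x t2).1 - (x t1).1 = ∫ u in t1..t2, Θd u := by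
    simp only [hdΘd]
    exact (integral_eq_sub_of_hasDerivAt (fun u _ => hΘD u)
      (cxd.fst.intervalIntegrable _ _)).symm
  have hlip : ∀ u w, t1 ≤ u → u ≤ w → w ≤ t2 → |Θd w - Θd u| ≤ m*c*(w-u) := by
    intro u w hu huw hw
    have hftc2 : Θd w - Θd u = ∫ r in u..w, Θdd r := by
      simp only [hdΘd, hdΘdd]
      exact (integral_eq_sub_of_hasDerivAt (fun r _ => hΘdD r)
        (cxdd.fst.intervalIntegrable _ _)).symm
    rw [hftc2]
    have habs : |∫ r in u..w, Θdd r| ≤ ∫ r in u..w, |Θdd r| :=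
      intervalIntegral.abs_integral_le_integral_abs huw
    have hmono : (∫ r in u..w, |Θdd r|) ≤ ∫ r in u..w, m*c :=
      integral_mono_on huw (cΘdd.abs.intervalIntegrable _ _) (_root_.intervalIntegrable_const)
        (fun r hr => hbd r ⟨le_trans hu hr.1, le_trans hr.2 hw⟩)
    rw [intervalIntegral.integral_const, smul_eq_mul] at hmono
    calc |∫ r in u..w, Θdd r| ≤ _ := habs
      _ ≤ (w-u)*(m*c) := hmono
      _ = m*c*(w-u) := by ring
  have e1 : -(m*c)*((t-t1)^2/2) ≤ ∫ u in t1..t, (Θd t - Θd u) := by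
    have hptw : ∀ u ∈ Set.Icc t1 t, -(m*c)*(t-u) ≤ Θd t - Θd u := by
      intro u hu
      have h' := (abs_le.mp (hlip u t hu.1 hu.2 htIcc.2)).1
      nlinarith [h']
    have hFder : ∀ u : ℝ, HasDerivAt (fun w => -(m*c)*(t*w - w^2/2)) (-(m*c)*(t-u)) u := by
      intro u
      have h := (((hasDerivAt_id u).const_mul t).sub
        ((hasDerivAt_pow 2 u).div_const 2)).const_mul (-(m*c))
      refine h.congr_deriv ?_
      simp
    have hlow : (∫ u in t1..t, -(m*c)*(t-u))
        = -(m*c)*(t*t - t^2/2) - -(m*c)*(t*t1 - t1^2/2) :=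
      integral_eq_sub_of_hasDerivAt (fun u _ => hFder u)
        ((continuous_const.mul (continuous_const.sub continuous_id)).intervalIntegrable _ _)
    have hmono := integral_mono_on (μ := volume) htIcc.1
      ((continuous_const.mul (continuous_const.sub continuous_id)).intervalIntegrable _ _)
      ((continuous_const.sub cΘd).intervalIntegrable _ _) hptw
    calc -(m*c)*((t-t1)^2/2) = ∫ u in t1..t, -(m*c)*(t-u) := by rw [hlow]; ring
      _ ≤ _ := hmono
  have e2 : -(m*c)*((t2-t)^2/2) ≤ ∫ u in t..t2, (Θd t - Θd u) := by
    have hptw : ∀ u ∈ Set.Icc t t2, -(m*c)*(u-t) ≤ Θd t - Θd u := by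
      intro u hu
      have h' := (abs_le.mp (hlip t u htIcc.1 hu.1 hu.2)).2
      nlinarith [h']
    have hFder : ∀ u : ℝ, HasDerivAt (fun w => -(m*c)*(w^2/2 - t*w)) (-(m*c)*(u-t)) u := by
      intro u
      have h := (((hasDerivAt_pow 2 u).div_const 2).sub
        ((hasDerivAt_id u).const_mul t)).const_mul (-(m*c))
      refine h.congr_deriv ?_
      simp
    have hlow : (∫ u in t..t2, -(m*c)*(u-t))
        = -(m*c)*(t2^2/2 - t*t2) - -(m*c)*(t^2/2 - t*t) :=
      integral_eq_sub_of_hasDerivAt (fun u _ => hFder u)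
        ((continuous_const.mul (continuous_id.sub continuous_const)).intervalIntegrable _ _)
    have hmono := integral_mono_on (μ := volume) htIcc.2
      ((continuous_const.mul (continuous_id.sub continuous_const)).intervalIntegrable _ _)
      ((continuous_const.sub cΘd).intervalIntegrable _ _) hptw
    calc -(m*c)*((t2-t)^2/2) = ∫ u in t..t2, -(m*c)*(u-t) := by rw [hlow]; ring
      _ ≤ _ := hmono
  have hsplit : (t2-t1)*Θd t - ((x t2).1 - (x t1).1)
      = (∫ u in t1..t, (Θd t - Θd u)) + ∫ u in t..t2, (Θd t - Θd u) := by
    have i1 : (∫ u in t1..t, (Θd t - Θd u)) = (t-t1)*(Θd t) - ∫ u in t1..t, Θd u := by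
      rw [integral_sub (_root_.intervalIntegrable_const) (cΘd.intervalIntegrable _ _),
        intervalIntegral.integral_const, smul_eq_mul]
    have i2 : (∫ u in t..t2, (Θd t - Θd u)) = (t2-t)*(Θd t) - ∫ u in t..t2, Θd u := by
      rw [integral_sub (_root_.intervalIntegrable_const) (cΘd.intervalIntegrable _ _),
        intervalIntegral.integral_const, smul_eq_mul]
    have hadd : (∫ u in t1..t, Θd u) + (∫ u in t..t2, Θd u) = ∫ u in t1..t2, Θd u :=
      integral_add_adjacent_intervals (cΘd.intervalIntegrable _ _) (cΘd.intervalIntegrable _ _)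
    rw [i1, i2, hFTC]
    linarith [hadd]
  have hmain : -(m*c)*((t2-t1)^2/2) ≤ (t2-t1)*Θd t - ((x t2).1 - (x t1).1) := by
    rw [hsplit]
    have hsq : (t-t1)^2 + (t2-t)^2 ≤ (t2-t1)^2 := by
      nlinarith [mul_nonneg (sub_nonneg.mpr htIcc.1) (sub_nonneg.mpr htIcc.2)]
    nlinarith [e1, e2, mul_nonneg hmc0 (sub_nonneg.mpr hsq)]
  rw [ge_iff_le, hθder]
  have hexp : (Θd t - ((x t2).1 - (x t1).1)/(t2-t1)) * (t2-t1)
      = (t2-t1)*Θd t - ((x t2).1 - (x t1).1) := by field_simp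
  have h2' : (-(1/2)*((t2-t1)*c)*m) * (t2-t1)
      ≤ (Θd t - ((x t2).1 - (x t1).1)/(t2-t1)) * (t2-t1) := by
    rw [hexp]; nlinarith [hmain]
  exact le_of_mul_le_mul_right h2' hD
end
end

section
/- Let $\mu$ be a non-negative Radon measure on $\mathbb{R}^N$, let $0 < r < s$, and suppose there exist constants $C, \alpha, m > 0$ such that for all $0 < a < b \le s$, $e^{Cb^{\alpha}} \frac{\mu(B_b)}{b^m} - e^{Ca^{\alpha}} \frac{\mu(B_a)}{a^m} \ge 0$ (almost monotonicity of the density ratio). Then $\int_{B_s \setminus B_r} \frac{1}{|x|^m}\, d\mu(x) \le C' \left( 1 + \ln\frac{s}{r} \right) \frac{\mu(B_s)}{s^m}$ for a constant $C'$ depending only on $C, \alpha, m$ and $s \le 1$. -/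
/-!
Cut `B_s \ B_r` into the dyadic annuli `B_b \ B_{b/2}` with `b = s / 2 ^ k`; about
`log₂ (s / r)` of them suffice. On such an annulus `|x|^{-m} ≤ 2^m b^{-m}`, so its contribution
is at most `2^m μ(B_b) / b^m`, and almost monotonicity with `s ≤ 1` bounds every density ratio
`μ(B_b) / b^m` by `e^C μ(B_s) / s^m`.
-/

open MeasureTheory Metric Set Real

theorem le_exp_mul_of_almost_monotone {C α s b : ℝ} {g : ℝ → ℝ} (hC : 0 ≤ C) (hα : 0 ≤ α)
    (hs1 : s ≤ 1) (hgs : 0 ≤ g s)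
    (hmono : ∀ a b, 0 < a → a < b → b ≤ s → exp (C * a ^ α) * g a ≤ exp (C * b ^ α) * g b)
    (hb : 0 < b) (hbs : b ≤ s) :
    g b ≤ exp C * g s := by
  have key : exp (C * b ^ α) * g b ≤ exp (C * s ^ α) * g s := by
    rcases hbs.lt_or_eq with hlt | rfl
    · exact hmono b s hb hlt le_rfl
    · rfl
  have hexp : exp (C * s ^ α - C * b ^ α) ≤ exp C := by
    gcongr
    nlinarith [rpow_le_one (hb.le.trans hbs) hs1 hα, rpow_nonneg hb.le α]
  calc g b = exp (-(C * b ^ α)) * (exp (C * b ^ α) * g b) := by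
        rw [← mul_assoc, ← exp_add, neg_add_cancel, exp_zero, one_mul]
    _ ≤ exp (-(C * b ^ α)) * (exp (C * s ^ α) * g s) := by gcongr
    _ = exp (C * s ^ α - C * b ^ α) * g s := by rw [← mul_assoc, ← exp_add, neg_add_eq_sub]
    _ ≤ exp C * g s := by gcongr

theorem exists_nat_le_two_pow_and_le_log {x : ℝ} (hx : 1 ≤ x) :
    ∃ n : ℕ, x ≤ 2 ^ n ∧ (n : ℝ) ≤ 2 * (1 + log x) := by
  refine ⟨⌈logb 2 x⌉₊, ?_, ?_⟩
  · rw [← rpow_natCast, ← logb_le_iff_le_rpow one_lt_two (by positivity)]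
    exact Nat.le_ceil _
  · have hceil : (⌈logb 2 x⌉₊ : ℝ) < logb 2 x + 1 :=
      Nat.ceil_lt_add_one (logb_nonneg one_lt_two hx)
    have hlogb : logb 2 x ≤ 2 * log x := by
      have := log_two_gt_d9
      rw [logb, div_le_iff₀ (by linarith)]
      nlinarith [log_nonneg hx]
    linarith [log_nonneg hx]

section Annuli

variable {X : Type*} [PseudoMetricSpace X] [MeasurableSpace X] [OpensMeasurableSpace X]
  {μ : Measure X} {f : X → ℝ} {c : X}

theorem setIntegral_ball_diff_ball_div_two_pow_le {s A : ℝ} (hs : 0 < s)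
    (hf : ∀ t b, 0 < t → IntegrableOn f (ball c b \ ball c t) μ)
    (hA : ∀ b, 0 < b → b ≤ s → ∫ x in ball c b \ ball c (b / 2), f x ∂μ ≤ A) (n : ℕ) :
    ∫ x in ball c s \ ball c (s / 2 ^ n), f x ∂μ ≤ n * A := by
  induction n with
  | zero => simp
  | succ n ih =>
    have hb : 0 < s / 2 ^ n := by positivity
    have hle : s / 2 ^ n ≤ s := div_le_self hs.le (one_le_pow₀ one_le_two)
    rw [pow_succ, ← div_div, ← sdiff_union_sdiff_cancel (ball_subset_ball hle)
        (ball_subset_ball (half_le_self hb.le)),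
      setIntegral_union (disjoint_sdiff_left.mono_right sdiff_subset)
        (measurableSet_ball.diff measurableSet_ball) (hf _ _ (by positivity))
        (hf _ _ (by positivity))]
    push_cast
    linarith [hA _ hb hle]

theorem setIntegral_ball_diff_ball_le_log_mul {r s A : ℝ} (hr : 0 < r) (hrs : r < s)
    (hf₀ : 0 ≤ f) (hf : ∀ t b, 0 < t → IntegrableOn f (ball c b \ ball c t) μ)
    (hA : ∀ b, 0 < b → b ≤ s → ∫ x in ball c b \ ball c (b / 2), f x ∂μ ≤ A) :
    ∫ x in ball c s \ ball c r, f x ∂μ ≤ 2 * (1 + log (s / r)) * A := by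
  have hs : 0 < s := hr.trans hrs
  obtain ⟨n, hpow, hn⟩ := exists_nat_le_two_pow_and_le_log ((one_le_div hr).mpr hrs.le)
  have hrn : s / 2 ^ n ≤ r := by
    rw [div_le_iff₀ hr] at hpow
    rw [div_le_iff₀ (by positivity)]
    linarith
  have hA₀ : 0 ≤ A :=
    (setIntegral_nonneg (measurableSet_ball.diff measurableSet_ball) fun x _ => hf₀ x).trans
      (hA s hs le_rfl)
  calc ∫ x in ball c s \ ball c r, f x ∂μ
      ≤ ∫ x in ball c s \ ball c (s / 2 ^ n), f x ∂μ :=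
        setIntegral_mono_set (hf _ _ (by positivity)) (.of_forall hf₀)
          (sdiff_subset_sdiff_right (ball_subset_ball hrn)).eventuallyLE
    _ ≤ n * A := setIntegral_ball_diff_ball_div_two_pow_le hs hf hA n
    _ ≤ 2 * (1 + log (s / r)) * A := by gcongr

end Annuli

theorem norm_inv_norm_pow_le_of_notMem_ball {E : Type*} [SeminormedAddCommGroup E] {t : ℝ}
    (ht : 0 < t) (m : ℕ) {x : E} (hx : x ∉ ball 0 t) :
    ‖1 / ‖x‖ ^ m‖ ≤ 1 / t ^ m := by
  rw [mem_ball_zero_iff, not_lt] at hx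
  rw [Real.norm_of_nonneg (by positivity)]
  gcongr

section InvNormPow

variable {E : Type*} [NormedAddCommGroup E] [MeasurableSpace E] [ProperSpace E]
  {μ : Measure E} [IsFiniteMeasureOnCompacts μ] {t b : ℝ}

theorem integrableOn_inv_norm_pow_ball_diff_ball [OpensMeasurableSpace E] (ht : 0 < t) (m : ℕ) :
    IntegrableOn (fun x : E => 1 / ‖x‖ ^ m) (ball 0 b \ ball 0 t) μ :=
  .of_bound ((measure_mono sdiff_subset).trans_lt measure_ball_lt_top)
    (by fun_prop : Measurable fun x : E => 1 / ‖x‖ ^ m).aestronglyMeasurable (1 / t ^ m)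
    (ae_restrict_of_forall_mem (measurableSet_ball.diff measurableSet_ball)
      fun _ hx => norm_inv_norm_pow_le_of_notMem_ball ht m hx.2)

theorem setIntegral_inv_norm_pow_ball_diff_ball_le (ht : 0 < t) (m : ℕ) :
    ∫ x in ball 0 b \ ball 0 t, 1 / ‖x‖ ^ m ∂μ ≤ μ.real (ball 0 b) / t ^ m := by
  have hfin : μ (ball (0 : E) b \ ball 0 t) < ⊤ :=
    (measure_mono sdiff_subset).trans_lt measure_ball_lt_top
  calc ∫ x in ball 0 b \ ball 0 t, 1 / ‖x‖ ^ m ∂μ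
      ≤ ‖∫ x in ball 0 b \ ball 0 t, 1 / ‖x‖ ^ m ∂μ‖ := le_norm_self _
    _ ≤ 1 / t ^ m * μ.real (ball 0 b \ ball 0 t) :=
        norm_setIntegral_le_of_norm_le_const hfin
          fun _ hx => norm_inv_norm_pow_le_of_notMem_ball ht m hx.2
    _ ≤ 1 / t ^ m * μ.real (ball 0 b) := by
        gcongr
        exacts [measure_ball_lt_top.ne, sdiff_subset]
    _ = μ.real (ball 0 b) / t ^ m := one_div_mul_eq_div _ _

end InvNormPow

theorem stmt15_general (C α : ℝ) (m : ℕ) (hC : 0 < C) (hα : 0 < α) :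
    ∃ C' > (0 : ℝ), ∀ (N : ℕ) (μ : Measure (EuclideanSpace ℝ (Fin N)))
      [IsFiniteMeasureOnCompacts μ] [μ.Regular],
      ∀ r s : ℝ, 0 < r → r < s → s ≤ 1 →
      (∀ a b : ℝ, 0 < a → a < b → b ≤ s →
        Real.exp (C * a ^ α) * (μ (ball (0 : EuclideanSpace ℝ (Fin N)) a)).toReal / a ^ m
          ≤ Real.exp (C * b ^ α) *
              (μ (ball (0 : EuclideanSpace ℝ (Fin N)) b)).toReal / b ^ m) →
      ∫ x in ball (0 : EuclideanSpace ℝ (Fin N)) s \ ball 0 r, 1 / ‖x‖ ^ m ∂μ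
        ≤ C' * (1 + Real.log (s / r)) *
            (μ (ball (0 : EuclideanSpace ℝ (Fin N)) s)).toReal / s ^ m := by
  refine ⟨2 ^ (m + 1) * exp C, by positivity, ?_⟩
  intro N μ _ _ r s hr hrs hs1 hmono
  have hs : 0 < s := hr.trans hrs
  set ratio : ℝ → ℝ := fun b => μ.real (ball 0 b) / b ^ m
  have hratio (b : ℝ) (hb : 0 < b) (hbs : b ≤ s) : ratio b ≤ exp C * ratio s :=
    le_exp_mul_of_almost_monotone hC.le hα.le hs1 (by positivity)
      (fun a b ha hab hbs => by
        simpa only [ratio, measureReal_def, mul_div_assoc] using hmono a b ha hab hbs)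
      hb hbs
  have hdyadic (b : ℝ) (hb : 0 < b) (hbs : b ≤ s) :
      ∫ x in ball 0 b \ ball 0 (b / 2), 1 / ‖x‖ ^ m ∂μ ≤ 2 ^ m * (exp C * ratio s) :=
    calc _ ≤ μ.real (ball 0 b) / (b / 2) ^ m :=
          setIntegral_inv_norm_pow_ball_diff_ball_le (half_pos hb) m
      _ = 2 ^ m * ratio b := by
          simp only [ratio, div_pow]
          field_simp
      _ ≤ 2 ^ m * (exp C * ratio s) := by gcongr; exact hratio b hb hbs
  calc _ ≤ 2 * (1 + log (s / r)) * (2 ^ m * (exp C * ratio s)) :=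
        setIntegral_ball_diff_ball_le_log_mul hr hrs (fun x => by positivity)
          (fun _ _ ht => integrableOn_inv_norm_pow_ball_diff_ball ht m) hdyadic
    _ = _ := by
        simp only [ratio, measureReal_def]
        ring

/-- Let `μ` be a non-negative Radon measure on `ℝ^N`, `0 < r < s ≤ 1`,
and suppose the almost-monotonicity `e^{Cb^α} μ(B_b)/b^m ≥ e^{Ca^α} μ(B_a)/a^m` holds for
all `0 < a < b ≤ s`.  Then
`∫_{B_s \ B_r} |x|^{-m} dμ ≤ C' (1 + ln(s/r)) μ(B_s)/s^m`
for a constant `C'` depending only on `C`, `α`, `m`. -/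
theorem stmt15 (C α : ℝ) (m : ℕ) (hC : 0 < C) (hα : 0 < α) (hm : 0 < m) :
    ∃ C' > (0 : ℝ), ∀ (N : ℕ) (μ : Measure (EuclideanSpace ℝ (Fin N)))
      [IsFiniteMeasureOnCompacts μ] [μ.Regular],
      ∀ r s : ℝ, 0 < r → r < s → s ≤ 1 →
      (∀ a b : ℝ, 0 < a → a < b → b ≤ s →
        Real.exp (C * a ^ α) * (μ (ball (0 : EuclideanSpace ℝ (Fin N)) a)).toReal / a ^ m
          ≤ Real.exp (C * b ^ α) *
              (μ (ball (0 : EuclideanSpace ℝ (Fin N)) b)).toReal / b ^ m) →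
      ∫ x in ball (0 : EuclideanSpace ℝ (Fin N)) s \ ball 0 r, 1 / ‖x‖ ^ m ∂μ
        ≤ C' * (1 + Real.log (s / r)) *
            (μ (ball (0 : EuclideanSpace ℝ (Fin N)) s)).toReal / s ^ m :=
  stmt15_general C α m hC hα
end

section
/- Let $\Gamma$ be an $(m-1)$-dimensional $C^{1,\alpha}$ submanifold of $\mathbb{R}^{m+n}$ through the origin such that $|x^\perp| \le C_\Gamma |x|^{1+\alpha}$ for every $x \in \Gamma \cap B_1$ (where $x^\perp$ is the component of the position vector orthogonal to $T_x \Gamma$), and assume the $(m-1)$-dimensional Hausdorff measure of $\Gamma \cap B_t$ is at most $C_\Gamma t^{m-1}$ for $t \le 1$. Let $i(x) = x/|x|$. Then for all $0 < r < s \le 1$, $\mathbf{M}\big(i_\sharp (\a{\Gamma} \res (B_s \setminus B_r))\big) = \int_{\Gamma \cap (B_s \setminus B_r)} \frac{|x^\perp|}{|x|^{m}}\, d\mathcal{H}^{m-1} \le C\, s^{\alpha}$, with $C$ depending only on $C_\Gamma$, $m$, $\alpha$. -/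
open MeasureTheory Metric
open scoped ENNReal

/-- Let `Γ` be an `(m-1)`-dimensional `C^{1,α}` submanifold of
`ℝ^{m+n}` through the origin, with tangent spaces `Tan x` at `x ∈ Γ`, such that
`|x^⊥| ≤ C_Γ |x|^{1+α}` for all `x ∈ Γ ∩ B_1` (where `x^⊥ = x - proj_{Tan x} x`), and
`H^{m-1}(Γ ∩ B_t) ≤ C_Γ t^{m-1}` for `t ≤ 1`.  Then for all `0 < r < s ≤ 1`, the mass
of the pushforward of `Γ ⌐ (B_s \ B_r)` under `i(x) = x/|x|`, namely
`∫_{Γ ∩ (B_s \ B_r)} |x^⊥|/|x|^m dH^{m-1}`, is at most `C s^α`, with `C` depending only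
on `C_Γ`, `m`, `α`. -/
theorem stmt18 (m n : ℕ) (hm : 1 ≤ m) (α CΓ : ℝ) (hα : 0 < α) (hCΓ : 0 < CΓ) :
    ∃ C > (0 : ℝ), ∀ (Γ : Set (EuclideanSpace ℝ (Fin (m + n))))
      (Tan : EuclideanSpace ℝ (Fin (m + n)) → Submodule ℝ (EuclideanSpace ℝ (Fin (m + n)))),
      (0 : EuclideanSpace ℝ (Fin (m + n))) ∈ Γ →
      (∀ x ∈ Γ ∩ ball (0 : EuclideanSpace ℝ (Fin (m + n))) 1,
        ‖x - (Submodule.orthogonalProjection (Tan x) x : EuclideanSpace ℝ (Fin (m + n)))‖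
          ≤ CΓ * ‖x‖ ^ (1 + α)) →
      (∀ t : ℝ, 0 < t → t ≤ 1 →
        μH[((m : ℝ) - 1)] (Γ ∩ ball (0 : EuclideanSpace ℝ (Fin (m + n))) t)
          ≤ ENNReal.ofReal (CΓ * t ^ ((m : ℝ) - 1))) →
      ∀ r s : ℝ, 0 < r → r < s → s ≤ 1 →
        ∫ x in Γ ∩ (ball (0 : EuclideanSpace ℝ (Fin (m + n))) s \ ball 0 r),
            ‖x - (Submodule.orthogonalProjection (Tan x) x : EuclideanSpace ℝ (Fin (m + n)))‖
              / ‖x‖ ^ m ∂(μH[((m : ℝ) - 1)])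
          ≤ C * s ^ α := by
  classical
  set E := EuclideanSpace ℝ (Fin (m + n)) with hE_def
  set q : ℝ := (2 : ℝ)⁻¹ ^ α with hq_def
  have hq0 : 0 < q := Real.rpow_pos_of_pos (by norm_num) α
  have hq1 : q < 1 := Real.rpow_lt_one (by norm_num) (by norm_num) hα
  set K : ℝ := CΓ ^ 2 * 2 ^ m with hK_def
  have hK0 : 0 < K := by positivity
  have h1q : (0:ℝ) < 1 - q := by linarith
  refine ⟨K * (1 - q)⁻¹, by positivity, ?_⟩
  intro Γ Tan h0 hperp hHmeas r s hr hrs hs1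
  have hs0 : 0 < s := hr.trans hrs
  set μ : Measure E := μH[((m : ℝ) - 1)] with hμ_def
  set S : Set E := Γ ∩ (ball (0 : E) s \ ball 0 r) with hS_def
  set ν : Measure E := μ.restrict S with hν_def
  set f : E → ℝ := fun x =>
    ‖x - (Submodule.orthogonalProjection (Tan x) x : E)‖ / ‖x‖ ^ m with hf_def
  set g : E → ℝ := fun x => CΓ * ‖x‖ ^ (1 + α) / ‖x‖ ^ m with hg_def
  have hg_meas : Measurable g := by
    have h1 : Continuous fun x : E => CΓ * ‖x‖ ^ (1 + α) :=
      continuous_const.mul (continuous_norm.rpow_const fun x => Or.inr (by linarith))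
    exact (h1.measurable).div ((continuous_norm.pow m).measurable)
  have hg_nonneg : ∀ x, 0 ≤ g x := fun x => by
    simp only [hg_def]
    positivity
  -- pointwise bound on S
  have hfg_on : ∀ x ∈ S, f x ≤ g x := by
    intro x hx
    have hxΓ : x ∈ Γ := hx.1
    have hxs : ‖x‖ < s := mem_ball_zero_iff.mp hx.2.1
    have hx1 : x ∈ ball (0 : E) 1 := mem_ball_zero_iff.mpr (hxs.trans_le hs1)
    exact div_le_div_of_nonneg_right (hperp x ⟨hxΓ, hx1⟩) (by positivity) |>.trans_eq rfl
  -- per-annulus estimate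
  have hj : ∀ j : ℕ, ∫⁻ x in ball (0:E) (s * 2⁻¹ ^ j) \ ball 0 (s * 2⁻¹ ^ (j+1)),
      ENNReal.ofReal (g x) ∂ν ≤ ENNReal.ofReal (K * s ^ α * q ^ j) := by
    intro j
    set t : ℝ := s * 2⁻¹ ^ j with ht_def
    have ht0 : 0 < t := by positivity
    have ht1 : t ≤ 1 := by
      have h2 : (2:ℝ)⁻¹ ^ j ≤ 1 := pow_le_one₀ (by norm_num) (by norm_num)
      nlinarith
    set u : ℝ := s * 2⁻¹ ^ (j+1) with hu_def
    have hu0 : 0 < u := by positivity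
    have hut : u = t * 2⁻¹ := by rw [ht_def, hu_def, pow_succ]; ring
    have hbd : ∀ x ∈ ball (0:E) t \ ball 0 u,
        ENNReal.ofReal (g x) ≤ ENNReal.ofReal (CΓ * t ^ (1+α) / u ^ m) := by
      intro x hx
      have hxlt : ‖x‖ < t := mem_ball_zero_iff.mp hx.1
      have hxge : u ≤ ‖x‖ := by
        have h3 := hx.2
        rw [mem_ball_zero_iff, not_lt] at h3
        exact h3
      apply ENNReal.ofReal_le_ofReal
      have hnum : CΓ * ‖x‖ ^ (1+α) ≤ CΓ * t ^ (1+α) :=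
        mul_le_mul_of_nonneg_left
          (Real.rpow_le_rpow (norm_nonneg x) hxlt.le (by linarith)) hCΓ.le
      have hden : u ^ m ≤ ‖x‖ ^ m := pow_le_pow_left₀ hu0.le hxge m
      exact div_le_div₀ (by positivity) hnum (by positivity) hden
    calc ∫⁻ x in ball (0:E) t \ ball 0 u, ENNReal.ofReal (g x) ∂ν
        ≤ ∫⁻ _x in ball (0:E) t \ ball 0 u,
            ENNReal.ofReal (CΓ * t ^ (1+α) / u ^ m) ∂ν :=
          setLIntegral_mono measurable_const hbd
      _ = ENNReal.ofReal (CΓ * t ^ (1+α) / u ^ m) * ν (ball (0:E) t \ ball 0 u) := by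
          rw [setLIntegral_const]
      _ ≤ ENNReal.ofReal (CΓ * t ^ (1+α) / u ^ m)
            * ENNReal.ofReal (CΓ * t ^ ((m:ℝ)-1)) := by
          gcongr
          calc ν (ball (0:E) t \ ball 0 u) ≤ ν (ball 0 t) :=
                measure_mono Set.diff_subset
            _ = μ (ball (0:E) t ∩ S) := Measure.restrict_apply measurableSet_ball
            _ ≤ μ (Γ ∩ ball (0:E) t) := measure_mono (fun x hx => ⟨hx.2.1, hx.1⟩)
            _ ≤ ENNReal.ofReal (CΓ * t ^ ((m:ℝ)-1)) := hHmeas t ht0 ht1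
      _ = ENNReal.ofReal (CΓ * t ^ (1+α) / u ^ m * (CΓ * t ^ ((m:ℝ)-1))) := by
          rw [← ENNReal.ofReal_mul (by positivity)]
      _ = ENNReal.ofReal (K * s ^ α * q ^ j) := by
          congr 1
          have htm : (0:ℝ) < t ^ m := by positivity
          have e1 : t ^ (1+α) = t * t ^ α := by
            rw [Real.rpow_add ht0, Real.rpow_one]
          have e2 : t ^ ((m:ℝ)-1) = t ^ m / t := by
            rw [Real.rpow_sub ht0, Real.rpow_one, Real.rpow_natCast]
          have e3 : u ^ m = t ^ m * 2⁻¹ ^ m := by rw [hut, mul_pow]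
          have e4 : t ^ α = s ^ α * q ^ j := by
            rw [ht_def, Real.mul_rpow hs0.le (by positivity), hq_def,
              ← Real.rpow_natCast ((2:ℝ)⁻¹) j, ← Real.rpow_natCast ((2:ℝ)⁻¹ ^ α) j,
              ← Real.rpow_mul (by norm_num), ← Real.rpow_mul (by norm_num),
              mul_comm α (j:ℝ)]
          rw [e1, e2, e3, e4, hK_def]
          have htα : (0:ℝ) < t ^ α := Real.rpow_pos_of_pos ht0 α
          field_simp
          ring_nf
          rw [← mul_pow]; norm_num
  -- key lintegral bound
  have key : ∫⁻ x, ENNReal.ofReal (g x) ∂ν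
      ≤ ENNReal.ofReal (K * s ^ α) * (1 - ENNReal.ofReal q)⁻¹ := by
    set U : Set E := ball (0:E) s \ {0} with hU_def
    have hU : MeasurableSet U := measurableSet_ball.diff (measurableSet_singleton 0)
    have hνUc : ν Uᶜ = 0 := by
      rw [hν_def, Measure.restrict_apply hU.compl]
      have : Uᶜ ∩ S = ∅ := by
        ext x
        simp only [Set.mem_inter_iff, Set.mem_compl_iff, Set.mem_empty_iff_false, iff_false,
          not_and]
        intro hxU hxS
        apply hxU
        refine ⟨hxS.2.1, ?_⟩
        simp only [Set.mem_singleton_iff]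
        intro h0x
        exact hxS.2.2 (by rw [h0x]; exact mem_ball_self hr)
      rw [this, measure_empty]
    have hcover : U ⊆ ⋃ j : ℕ, ball (0:E) (s * 2⁻¹ ^ j) \ ball 0 (s * 2⁻¹ ^ (j+1)) := by
      intro x hx
      have hx0 : x ≠ 0 := hx.2
      have hxpos : 0 < ‖x‖ := norm_pos_iff.mpr hx0
      have hxs : ‖x‖ < s := mem_ball_zero_iff.mp hx.1
      have hex : ∃ k : ℕ, ¬ ‖x‖ < s * 2⁻¹ ^ k := by
        obtain ⟨k, hk⟩ := exists_pow_lt_of_lt_one (div_pos hxpos hs0)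
          (by norm_num : (2:ℝ)⁻¹ < 1)
        refine ⟨k, not_lt.mpr ?_⟩
        have := (lt_div_iff₀ hs0).mp hk
        linarith [this]
      set k0 := Nat.find hex with hk0_def
      have hk0 : ¬ ‖x‖ < s * 2⁻¹ ^ k0 := Nat.find_spec hex
      have hk0pos : 0 < k0 := by
        rcases Nat.eq_zero_or_pos k0 with h | h
        · exfalso; apply hk0; rw [h]; simpa using hxs
        · exact h
      refine Set.mem_iUnion.mpr ⟨k0 - 1, ?_, ?_⟩
      · rw [mem_ball_zero_iff]
        by_contra hc
        exact (Nat.find_min hex (Nat.sub_lt hk0pos one_pos)) hc |>.elim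
      · rw [mem_ball_zero_iff.not]
        rw [Nat.sub_add_cancel hk0pos]
        exact hk0
    calc ∫⁻ x, ENNReal.ofReal (g x) ∂ν
        = (∫⁻ x in U, ENNReal.ofReal (g x) ∂ν)
          + ∫⁻ x in Uᶜ, ENNReal.ofReal (g x) ∂ν := (lintegral_add_compl _ hU).symm
      _ = ∫⁻ x in U, ENNReal.ofReal (g x) ∂ν := by
          rw [setLIntegral_measure_zero _ _ hνUc, add_zero]
      _ ≤ ∫⁻ x in ⋃ j : ℕ, ball (0:E) (s * 2⁻¹ ^ j) \ ball 0 (s * 2⁻¹ ^ (j+1)),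
            ENNReal.ofReal (g x) ∂ν := lintegral_mono_set hcover
      _ ≤ ∑' j : ℕ, ∫⁻ x in ball (0:E) (s * 2⁻¹ ^ j) \ ball 0 (s * 2⁻¹ ^ (j+1)),
            ENNReal.ofReal (g x) ∂ν := lintegral_iUnion_le _ _
      _ ≤ ∑' j : ℕ, ENNReal.ofReal (K * s ^ α * q ^ j) := ENNReal.tsum_le_tsum hj
      _ = ∑' j : ℕ, ENNReal.ofReal (K * s ^ α) * ENNReal.ofReal q ^ j := by
          refine tsum_congr fun j => ?_
          rw [ENNReal.ofReal_mul (by positivity), ENNReal.ofReal_pow hq0.le]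
      _ = ENNReal.ofReal (K * s ^ α) * (1 - ENNReal.ofReal q)⁻¹ := by
          rw [ENNReal.tsum_mul_left, ENNReal.tsum_geometric]
  have hbound_ne_top :
      ENNReal.ofReal (K * s ^ α) * (1 - ENNReal.ofReal q)⁻¹ ≠ ⊤ := by
    apply ENNReal.mul_ne_top ENNReal.ofReal_ne_top
    rw [ENNReal.inv_ne_top]
    intro hc
    have hlt : ENNReal.ofReal q < 1 := ENNReal.ofReal_lt_one.mpr hq1
    rw [tsub_eq_zero_iff_le] at hc
    exact absurd hc (not_le.mpr hlt)
  have hfinal : (ENNReal.ofReal (K * s ^ α) * (1 - ENNReal.ofReal q)⁻¹).toReal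
      = K * (1 - q)⁻¹ * s ^ α := by
    have h1q' : (1 : ℝ≥0∞) - ENNReal.ofReal q = ENNReal.ofReal (1 - q) := by
      rw [ENNReal.ofReal_sub 1 hq0.le, ENNReal.ofReal_one]
    rw [h1q', ENNReal.toReal_mul, ENNReal.toReal_inv, ENNReal.toReal_ofReal (by positivity),
      ENNReal.toReal_ofReal h1q.le]
    ring
  by_cases hint : Integrable f ν
  · have hg_int : Integrable g ν := by
      refine ⟨hg_meas.aestronglyMeasurable, ?_⟩
      rw [hasFiniteIntegral_iff_ofReal (Filter.Eventually.of_forall hg_nonneg)]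
      exact key.trans_lt (lt_top_iff_ne_top.mpr hbound_ne_top)
    set f' : E → ℝ := hint.1.mk f with hf'_def
    have hf'_meas : StronglyMeasurable f' := hint.1.stronglyMeasurable_mk
    have hff' : f =ᵐ[ν] f' := hint.1.ae_eq_mk
    have hf'_int : Integrable f' ν := hint.congr hff'
    have hf'g : f' ≤ᵐ[ν] g := by
      have hne : ν {x | ¬ f x = f' x} = 0 := ae_iff.mp hff'
      rw [Filter.EventuallyLE, ae_iff]
      have hBmeas : MeasurableSet {x : E | g x < f' x} :=
        measurableSet_lt hg_meas hf'_meas.measurable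
      have hset : {x : E | ¬ f' x ≤ g x} = {x : E | g x < f' x} := by
        ext x; simp [not_le]
      rw [hset, hν_def, Measure.restrict_apply hBmeas]
      have hsub : {x : E | g x < f' x} ∩ S ⊆ {x | ¬ f x = f' x} ∩ S := by
        intro x hx
        exact ⟨fun hEq => absurd (hEq ▸ (hfg_on x hx.2)) (not_le.mpr hx.1), hx.2⟩
      have : μ ({x : E | g x < f' x} ∩ S) ≤ ν {x | ¬ f x = f' x} :=
        (measure_mono hsub).trans (Measure.le_restrict_apply _ _)
      exact le_antisymm (hne ▸ this) zero_le
    calc ∫ x in S, f x ∂μ = ∫ x, f' x ∂ν := integral_congr_ae hff'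
      _ ≤ ∫ x, g x ∂ν := integral_mono_ae hf'_int hg_int hf'g
      _ = (∫⁻ x, ENNReal.ofReal (g x) ∂ν).toReal := by
          rw [integral_eq_lintegral_of_nonneg_ae (Filter.Eventually.of_forall hg_nonneg)
            hg_meas.aestronglyMeasurable]
      _ ≤ (ENNReal.ofReal (K * s ^ α) * (1 - ENNReal.ofReal q)⁻¹).toReal :=
          ENNReal.toReal_mono hbound_ne_top key
      _ = K * (1 - q)⁻¹ * s ^ α := hfinal
  · rw [show (∫ x in S, f x ∂μ) = ∫ x, f x ∂ν from rfl, integral_undef hint]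
    positivity
end
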